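/- arXiv:1711.07944 — 2 statements merged into one kernel-verified Lean document; each statement's English description precedes it below -/
import Mathlib

section
/- For every smooth spin ±2 weighted function Ξ on the sphere, the azimuthal derivative is controlled by the spinorial gradient: ∫_{S²} |∇̊^{[±2]}Ξ|² sinθ dθ dφ ≥ (1/8) ∫_{S²} |∂_φ Ξ|² sinθ dθ dφ. -/
noncomputable section

/-- Partial derivative in the polar coordinate `θ`. -/
def pdTheta (f : ℝ → ℝ → ℂ) : ℝ → ℝ → ℂ := fun θ φ => deriv (fun t => f t φ) θ

/-- Partial derivative in the azimuthal coordinate `φ`. -/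
def pdPhi (f : ℝ → ℝ → ℂ) : ℝ → ℝ → ℂ := fun θ φ => deriv (fun p => f θ p) φ

/-- The spin-weighted vector field `Z̃₁ = −sinφ ∂_θ + cosφ(−is cscθ − cotθ ∂_φ)`. -/
def Ztilde1 (s : ℤ) (f : ℝ → ℝ → ℂ) : ℝ → ℝ → ℂ := fun θ φ =>
  -(Real.sin φ : ℂ) * pdTheta f θ φ +
    (Real.cos φ : ℂ) *
      ((-Complex.I * (s : ℂ) / (Real.sin θ : ℂ)) * f θ φ -
        ((Real.cos θ / Real.sin θ : ℝ) : ℂ) * pdPhi f θ φ)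

/-- The spin-weighted vector field `Z̃₂ = −cosφ ∂_θ − sinφ(−is cscθ − cotθ ∂_φ)`. -/
def Ztilde2 (s : ℤ) (f : ℝ → ℝ → ℂ) : ℝ → ℝ → ℂ := fun θ φ =>
  -(Real.cos φ : ℂ) * pdTheta f θ φ -
    (Real.sin φ : ℂ) *
      ((-Complex.I * (s : ℂ) / (Real.sin θ : ℂ)) * f θ φ -
        ((Real.cos θ / Real.sin θ : ℝ) : ℂ) * pdPhi f θ φ)

/-- The spin-weighted vector field `Z̃₃ = ∂_φ`. -/
def Ztilde3 (f : ℝ → ℝ → ℂ) : ℝ → ℝ → ℂ := pdPhi f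

/-- All functions obtained from `f` by iterated application of `Z̃₁, Z̃₂, Z̃₃`. -/
inductive InZClosure (s : ℤ) (f : ℝ → ℝ → ℂ) : (ℝ → ℝ → ℂ) → Prop
  | base : InZClosure s f f
  | z1 {g : ℝ → ℝ → ℂ} : InZClosure s f g → InZClosure s f (Ztilde1 s g)
  | z2 {g : ℝ → ℝ → ℂ} : InZClosure s f g → InZClosure s f (Ztilde2 s g)
  | z3 {g : ℝ → ℝ → ℂ} : InZClosure s f g → InZClosure s f (Ztilde3 g)

/-- A function of `(θ, φ)` extends continuously (uniformly in `φ`) to the two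
poles `θ = 0` and `θ = π` of the coordinate system. -/
def ExtendsToPoles (g : ℝ → ℝ → ℂ) : Prop :=
  (∃ c : ℂ, ∀ ε > 0, ∃ δ > 0, ∀ θ ∈ Set.Ioo (0 : ℝ) δ, ∀ φ : ℝ, ‖g θ φ - c‖ < ε) ∧
  (∃ c : ℂ, ∀ ε > 0, ∃ δ > 0, ∀ θ ∈ Set.Ioo (Real.pi - δ) Real.pi, ∀ φ : ℝ, ‖g θ φ - c‖ < ε)

/-- A smooth spin `s`-weighted function on the sphere: all iterated applications
of the operators `Z̃₁, Z̃₂, Z̃₃` are smooth away from the poles, `2π`-periodic in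
`φ`, and extend continuously to the poles. -/
def SmoothSpinWeighted (s : ℤ) (f : ℝ → ℝ → ℂ) : Prop :=
  ∀ g : ℝ → ℝ → ℂ, InZClosure s f g →
    ContDiffOn ℝ (⊤ : ℕ∞) (fun p : ℝ × ℝ => g p.1 p.2)
      (Set.Ioo 0 Real.pi ×ˢ (Set.univ : Set ℝ)) ∧
    (∀ θ φ : ℝ, g θ (φ + 2 * Real.pi) = g θ φ) ∧ ExtendsToPoles g

end



open Set MeasureTheory intervalIntegral Real
noncomputable section

/-- The coordinate domain away from the poles. -/
def Udom : Set (ℝ × ℝ) := Set.Ioo 0 Real.pi ×ˢ (Set.univ : Set ℝ)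

lemma Udom_open : IsOpen Udom := isOpen_Ioo.prod isOpen_univ

lemma mem_Udom {θ φ : ℝ} (hθ : θ ∈ Set.Ioo 0 Real.pi) : ((θ, φ) : ℝ × ℝ) ∈ Udom :=
  ⟨hθ, trivial⟩

/-- uncurried version -/
def unc (g : ℝ → ℝ → ℂ) : ℝ × ℝ → ℂ := fun p => g p.1 p.2

section Calc

variable {g : ℝ → ℝ → ℂ} (hg : ContDiffOn ℝ (⊤ : ℕ∞) (unc g) Udom)
include hg

lemma hasFDerivAt_unc {p : ℝ × ℝ} (hp : p ∈ Udom) :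
    HasFDerivAt (unc g) (fderiv ℝ (unc g) p) p := by
  have := (hg.differentiableOn (by simp)).differentiableAt (Udom_open.mem_nhds hp)
  exact this.hasFDerivAt

lemma hasDerivAt_theta {θ φ : ℝ} (hθ : θ ∈ Set.Ioo 0 Real.pi) :
    HasDerivAt (fun t => g t φ) (fderiv ℝ (unc g) (θ, φ) ((1:ℝ), (0:ℝ))) θ := by
  have h1 : HasDerivAt (fun t : ℝ => ((t, φ) : ℝ × ℝ)) ((1:ℝ), (0:ℝ)) θ :=
    (hasDerivAt_id θ).prodMk (hasDerivAt_const θ φ)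
  exact HasFDerivAt.comp_hasDerivAt_of_eq θ (hasFDerivAt_unc hg (mem_Udom hθ)) h1 rfl

lemma hasDerivAt_phi {θ φ : ℝ} (hθ : θ ∈ Set.Ioo 0 Real.pi) :
    HasDerivAt (fun q => g θ q) (fderiv ℝ (unc g) (θ, φ) ((0:ℝ), (1:ℝ))) φ := by
  have h1 : HasDerivAt (fun q : ℝ => ((θ, q) : ℝ × ℝ)) ((0:ℝ), (1:ℝ)) φ :=
    (hasDerivAt_const φ θ).prodMk (hasDerivAt_id φ)
  exact HasFDerivAt.comp_hasDerivAt_of_eq φ (hasFDerivAt_unc hg (mem_Udom hθ)) h1 rfl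

lemma pdTheta_eq {θ φ : ℝ} (hθ : θ ∈ Set.Ioo 0 Real.pi) :
    pdTheta g θ φ = fderiv ℝ (unc g) (θ, φ) ((1:ℝ), (0:ℝ)) :=
  (hasDerivAt_theta hg hθ).deriv

lemma pdPhi_eq {θ φ : ℝ} (hθ : θ ∈ Set.Ioo 0 Real.pi) :
    pdPhi g θ φ = fderiv ℝ (unc g) (θ, φ) ((0:ℝ), (1:ℝ)) :=
  (hasDerivAt_phi hg hθ).deriv

lemma contDiffOn_fderiv_unc :
    ContDiffOn ℝ (⊤ : ℕ∞) (fun p => fderiv ℝ (unc g) p) Udom :=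
  hg.fderiv_of_isOpen Udom_open (le_of_eq rfl)

end Calc
/-- first derivative field -/
def fd (g : ℝ → ℝ → ℂ) : ℝ × ℝ → (ℝ × ℝ) →L[ℝ] ℂ := fun p => fderiv ℝ (unc g) p

/-- second derivative field -/
def fd2 (g : ℝ → ℝ → ℂ) : ℝ × ℝ → (ℝ × ℝ) →L[ℝ] (ℝ × ℝ) →L[ℝ] ℂ :=
  fun p => fderiv ℝ (fd g) p

section Calc2

variable {g : ℝ → ℝ → ℂ} (hg : ContDiffOn ℝ (⊤ : ℕ∞) (unc g) Udom)
include hg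

lemma contDiffOn_fd : ContDiffOn ℝ (⊤ : ℕ∞) (fd g) Udom :=
  hg.fderiv_of_isOpen Udom_open (le_of_eq rfl)

lemma hasFDerivAt_fd {p : ℝ × ℝ} (hp : p ∈ Udom) :
    HasFDerivAt (fd g) (fd2 g p) p :=
  (((contDiffOn_fd hg).differentiableOn (by simp)).differentiableAt
    (Udom_open.mem_nhds hp)).hasFDerivAt

lemma contOn_fd2 : ContinuousOn (fd2 g) Udom :=
  (contDiffOn_fd hg).continuousOn_fderiv_of_isOpen Udom_open (by simp)

lemma fd2_symm {p : ℝ × ℝ} (hp : p ∈ Udom) (v w : ℝ × ℝ) :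
    fd2 g p v w = fd2 g p w v := by
  have hev : ∀ᶠ y in nhds p, HasFDerivAt (unc g) (fd g y) y := by
    filter_upwards [Udom_open.mem_nhds hp] with y hy using hasFDerivAt_unc hg hy
  exact second_derivative_symmetric_of_eventually hev (hasFDerivAt_fd hg hp) v w

lemma hasDerivAt_theta_pdPhi {θ φ : ℝ} (hθ : θ ∈ Set.Ioo 0 Real.pi) :
    HasDerivAt (fun t => pdPhi g t φ) (fd2 g (θ, φ) ((1:ℝ), (0:ℝ)) ((0:ℝ), (1:ℝ))) θ := by
  have h1 : HasDerivAt (fun t : ℝ => ((t, φ) : ℝ × ℝ)) ((1:ℝ), (0:ℝ)) θ :=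
    (hasDerivAt_id θ).prodMk (hasDerivAt_const θ φ)
  have h2 : HasDerivAt (fun t : ℝ => fd g (t, φ)) (fd2 g (θ, φ) ((1:ℝ), (0:ℝ))) θ :=
    HasFDerivAt.comp_hasDerivAt_of_eq θ (hasFDerivAt_fd hg (mem_Udom hθ)) h1 rfl
  have h3 : HasDerivAt (fun t : ℝ => fd g (t, φ) ((0:ℝ), (1:ℝ)))
      (fd2 g (θ, φ) ((1:ℝ), (0:ℝ)) ((0:ℝ), (1:ℝ))) θ :=
    HasFDerivAt.comp_hasDerivAt_of_eq θ
      (ContinuousLinearMap.apply ℝ ℂ (((0:ℝ), (1:ℝ)) : ℝ × ℝ)).hasFDerivAt h2 rfl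
  refine h3.congr_of_eventuallyEq ?_
  filter_upwards [isOpen_Ioo.mem_nhds hθ] with t ht
  exact pdPhi_eq hg ht

lemma hasDerivAt_phi_pdTheta {θ φ : ℝ} (hθ : θ ∈ Set.Ioo 0 Real.pi) :
    HasDerivAt (fun q => pdTheta g θ q) (fd2 g (θ, φ) ((1:ℝ), (0:ℝ)) ((0:ℝ), (1:ℝ))) φ := by
  have h1 : HasDerivAt (fun q : ℝ => ((θ, q) : ℝ × ℝ)) ((0:ℝ), (1:ℝ)) φ :=
    (hasDerivAt_const φ θ).prodMk (hasDerivAt_id φ)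
  have h2 : HasDerivAt (fun q : ℝ => fd g (θ, q)) (fd2 g (θ, φ) ((0:ℝ), (1:ℝ))) φ :=
    HasFDerivAt.comp_hasDerivAt_of_eq φ (hasFDerivAt_fd hg (mem_Udom hθ)) h1 rfl
  have h3 : HasDerivAt (fun q : ℝ => fd g (θ, q) ((1:ℝ), (0:ℝ)))
      (fd2 g (θ, φ) ((0:ℝ), (1:ℝ)) ((1:ℝ), (0:ℝ))) φ :=
    HasFDerivAt.comp_hasDerivAt_of_eq φ
      (ContinuousLinearMap.apply ℝ ℂ (((1:ℝ), (0:ℝ)) : ℝ × ℝ)).hasFDerivAt h2 rfl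
  rw [fd2_symm hg (mem_Udom hθ)]
  refine h3.congr_of_eventuallyEq ?_
  refine Filter.Eventually.of_forall fun q => ?_
  exact pdTheta_eq hg hθ

lemma contOn_unc : ContinuousOn (unc g) Udom := hg.continuousOn

lemma contOn_pdTheta : ContinuousOn (fun p : ℝ × ℝ => pdTheta g p.1 p.2) Udom := by
  have h : ContinuousOn (fun p : ℝ × ℝ => fd g p ((1:ℝ), (0:ℝ))) Udom :=
    (contDiffOn_fd hg).continuousOn.clm_apply continuousOn_const
  exact h.congr fun p hp => by
    have : p = (p.1, p.2) := rfl
    rw [this]; exact pdTheta_eq hg hp.1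

lemma contOn_pdPhi : ContinuousOn (fun p : ℝ × ℝ => pdPhi g p.1 p.2) Udom := by
  have h : ContinuousOn (fun p : ℝ × ℝ => fd g p ((0:ℝ), (1:ℝ))) Udom :=
    (contDiffOn_fd hg).continuousOn.clm_apply continuousOn_const
  exact h.congr fun p hp => by
    have : p = (p.1, p.2) := rfl
    rw [this]; exact pdPhi_eq hg hp.1

lemma contOn_mixed : ContinuousOn (fun p : ℝ × ℝ => fd2 g p ((1:ℝ), (0:ℝ)) ((0:ℝ), (1:ℝ))) Udom :=
  ((contOn_fd2 hg).clm_apply continuousOn_const).clm_apply continuousOn_const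

end Calc2

/-- the boundary-producing quantity `G = Im(conj Ξ ∂φΞ) + s cosθ |Ξ|²` -/
def Gfun (s : ℤ) (g : ℝ → ℝ → ℂ) : ℝ → ℝ → ℝ := fun θ φ =>
  ((starRingEnd ℂ) (g θ φ) * pdPhi g θ φ).im + (s : ℝ) * Real.cos θ * Complex.normSq (g θ φ)

/-- `H = Im(conj Ξ ∂θΞ)` -/
def Hfun (g : ℝ → ℝ → ℂ) : ℝ → ℝ → ℝ := fun θ φ =>
  ((starRingEnd ℂ) (g θ φ) * pdTheta g θ φ).im

/-- `∂θ G` -/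
def DGfun (s : ℤ) (g : ℝ → ℝ → ℂ) : ℝ → ℝ → ℝ := fun θ φ =>
  ((starRingEnd ℂ) (pdTheta g θ φ) * pdPhi g θ φ).im +
    ((starRingEnd ℂ) (g θ φ) * fd2 g (θ, φ) ((1:ℝ), (0:ℝ)) ((0:ℝ), (1:ℝ))).im +
    (s : ℝ) * ((- Real.sin θ) * Complex.normSq (g θ φ) +
      Real.cos θ * (2 * ((starRingEnd ℂ) (g θ φ) * pdTheta g θ φ).re))

/-- `∂φ H` -/
def DHfun (g : ℝ → ℝ → ℂ) : ℝ → ℝ → ℝ := fun θ φ =>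
  ((starRingEnd ℂ) (pdPhi g θ φ) * pdTheta g θ φ).im +
    ((starRingEnd ℂ) (g θ φ) * fd2 g (θ, φ) ((1:ℝ), (0:ℝ)) ((0:ℝ), (1:ℝ))).im

section Calc3

variable {g : ℝ → ℝ → ℂ} (hg : ContDiffOn ℝ (⊤ : ℕ∞) (unc g) Udom)
include hg

lemma hasDerivAt_conj_theta {θ φ : ℝ} (hθ : θ ∈ Set.Ioo 0 Real.pi) :
    HasDerivAt (fun t => (starRingEnd ℂ) (g t φ)) ((starRingEnd ℂ) (pdTheta g θ φ)) θ := by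
  rw [pdTheta_eq hg hθ]
  exact Complex.conjCLE.toContinuousLinearMap.hasFDerivAt.comp_hasDerivAt_of_eq θ
    (hasDerivAt_theta hg hθ) rfl

lemma hasDerivAt_conj_phi {θ φ : ℝ} (hθ : θ ∈ Set.Ioo 0 Real.pi) :
    HasDerivAt (fun q => (starRingEnd ℂ) (g θ q)) ((starRingEnd ℂ) (pdPhi g θ φ)) φ := by
  rw [pdPhi_eq hg hθ]
  exact Complex.conjCLE.toContinuousLinearMap.hasFDerivAt.comp_hasDerivAt_of_eq φ
    (hasDerivAt_phi hg hθ) rfl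

lemma hasDerivAt_G {θ φ : ℝ} (hθ : θ ∈ Set.Ioo 0 Real.pi) :
    HasDerivAt (fun t => Gfun s g t φ) (DGfun s g θ φ) θ := by
  have hx : HasDerivAt (fun t => g t φ) (pdTheta g θ φ) θ := by
    rw [pdTheta_eq hg hθ]; exact hasDerivAt_theta hg hθ
  have hb : HasDerivAt (fun t => pdPhi g t φ)
      (fd2 g (θ, φ) ((1:ℝ), (0:ℝ)) ((0:ℝ), (1:ℝ))) θ := hasDerivAt_theta_pdPhi hg hθ
  have h1 : HasDerivAt (fun t => (starRingEnd ℂ) (g t φ) * pdPhi g t φ)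
      ((starRingEnd ℂ) (pdTheta g θ φ) * pdPhi g θ φ +
        (starRingEnd ℂ) (g θ φ) * fd2 g (θ, φ) ((1:ℝ), (0:ℝ)) ((0:ℝ), (1:ℝ))) θ :=
    (hasDerivAt_conj_theta hg hθ).mul hb
  have h1im : HasDerivAt (fun t => ((starRingEnd ℂ) (g t φ) * pdPhi g t φ).im)
      (((starRingEnd ℂ) (pdTheta g θ φ) * pdPhi g θ φ +
        (starRingEnd ℂ) (g θ φ) * fd2 g (θ, φ) ((1:ℝ), (0:ℝ)) ((0:ℝ), (1:ℝ))).im) θ :=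
    Complex.imCLM.hasFDerivAt.comp_hasDerivAt_of_eq θ h1 rfl
  -- normSq part
  have h2 : HasDerivAt (fun t => (starRingEnd ℂ) (g t φ) * g t φ)
      ((starRingEnd ℂ) (pdTheta g θ φ) * g θ φ + (starRingEnd ℂ) (g θ φ) * pdTheta g θ φ) θ :=
    (hasDerivAt_conj_theta hg hθ).mul hx
  have h2re : HasDerivAt (fun t => ((starRingEnd ℂ) (g t φ) * g t φ).re)
      (((starRingEnd ℂ) (pdTheta g θ φ) * g θ φ +
        (starRingEnd ℂ) (g θ φ) * pdTheta g θ φ).re) θ :=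
    Complex.reCLM.hasFDerivAt.comp_hasDerivAt_of_eq θ h2 rfl
  have hns : HasDerivAt (fun t => Complex.normSq (g t φ))
      (2 * ((starRingEnd ℂ) (g θ φ) * pdTheta g θ φ).re) θ := by
    have heq : (fun t => Complex.normSq (g t φ)) =
        (fun t => ((starRingEnd ℂ) (g t φ) * g t φ).re) := by
      funext t
      simp [Complex.normSq_apply, Complex.mul_re]
    rw [heq]
    convert h2re using 1
    have : (starRingEnd ℂ) (pdTheta g θ φ) * g θ φ =
        (starRingEnd ℂ) ((starRingEnd ℂ) (g θ φ) * pdTheta g θ φ) := by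
      rw [map_mul]; simp [mul_comm]
    rw [this, Complex.add_re, Complex.conj_re]
    ring
  have hcos : HasDerivAt (fun t => (s : ℝ) * Real.cos t) ((s:ℝ) * (- Real.sin θ)) θ :=
    (Real.hasDerivAt_cos θ).const_mul _
  have h3 : HasDerivAt (fun t => (s : ℝ) * Real.cos t * Complex.normSq (g t φ))
      ((s:ℝ) * (- Real.sin θ) * Complex.normSq (g θ φ) +
        (s : ℝ) * Real.cos θ * (2 * ((starRingEnd ℂ) (g θ φ) * pdTheta g θ φ).re)) θ :=
    hcos.mul hns
  have := h1im.add h3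
  refine this.congr_deriv ?_
  simp only [DGfun, Complex.add_im]
  ring

lemma hasDerivAt_H {θ φ : ℝ} (hθ : θ ∈ Set.Ioo 0 Real.pi) :
    HasDerivAt (fun q => Hfun g θ q) (DHfun g θ φ) φ := by
  have ha : HasDerivAt (fun q => pdTheta g θ q)
      (fd2 g (θ, φ) ((1:ℝ), (0:ℝ)) ((0:ℝ), (1:ℝ))) φ := hasDerivAt_phi_pdTheta hg hθ
  have h1 : HasDerivAt (fun q => (starRingEnd ℂ) (g θ q) * pdTheta g θ q)
      ((starRingEnd ℂ) (pdPhi g θ φ) * pdTheta g θ φ +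
        (starRingEnd ℂ) (g θ φ) * fd2 g (θ, φ) ((1:ℝ), (0:ℝ)) ((0:ℝ), (1:ℝ))) φ :=
    (hasDerivAt_conj_phi hg hθ).mul ha
  exact Complex.imCLM.hasFDerivAt.comp_hasDerivAt_of_eq φ h1 rfl

end Calc3

/-- the key algebraic pointwise identity -/
lemma key_pointwise (s : ℤ) (hs4 : s = 2 ∨ s = -2) (a b x m : ℂ) {sθ cθ : ℝ} (h : 0 < sθ) :
    ‖a‖^2 * sθ + ‖b + (s:ℂ) * Complex.I * (cθ:ℂ) * x‖^2 / sθ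
      = ‖a + ((s:ℂ)/2) * Complex.I * ((b + (s:ℂ) * Complex.I * (cθ:ℂ) * x) / (sθ:ℂ))‖^2 * sθ
        + ((s:ℝ)/2) * ((((starRingEnd ℂ) a * b).im + ((starRingEnd ℂ) x * m).im +
            (s:ℝ) * ((- sθ) * Complex.normSq x + cθ * (2 * ((starRingEnd ℂ) x * a).re)))
          - (((starRingEnd ℂ) b * a).im + ((starRingEnd ℂ) x * m).im))
        + 2 * sθ * Complex.normSq x := by
  have hne : sθ ≠ 0 := ne_of_gt h
  have hnec : (sθ : ℂ) ≠ 0 := by exact_mod_cast hne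
  have e : ∀ z : ℂ, ‖z‖^2 = Complex.normSq z := fun z => by
    rw [Complex.sq_norm]
  rcases hs4 with rfl | rfl <;>
  · simp only [Complex.sq_norm, Complex.normSq_apply, Complex.div_re,
      Complex.div_im, Complex.add_re, Complex.add_im, Complex.mul_re, Complex.mul_im,
      Complex.I_re, Complex.I_im, Complex.ofReal_re, Complex.ofReal_im, Complex.conj_re,
      Complex.conj_im, Complex.intCast_re, Complex.intCast_im, Int.cast_ofNat,
      Complex.re_ofNat, Complex.im_ofNat]
    push_cast
    field_simp
    ring

section Helpers

lemma cont_section {E : Type*} [TopologicalSpace E] {k : ℝ × ℝ → E}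
    (hk : ContinuousOn k Udom) {θ : ℝ} (hθ : θ ∈ Set.Ioo 0 Real.pi) :
    Continuous (fun φ => k (θ, φ)) := by
  rw [← continuousOn_univ]
  exact hk.comp ((continuous_const.prodMk continuous_id).continuousOn)
    (fun φ _ => mem_Udom hθ)

lemma contOn_param {k : ℝ × ℝ → ℝ} {a b c d : ℝ} (hcd : c ≤ d)
    (hk : ContinuousOn k (Set.Icc a b ×ˢ Set.Icc c d)) :
    ContinuousOn (fun θ => ∫ φ in c..d, k (θ, φ)) (Set.Icc a b) := by
  rcases le_or_gt a b with hab | hab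
  swap
  · intro θ₀ hθ₀; exact absurd (le_trans hθ₀.1 hθ₀.2) (not_le.mpr hab)
  obtain ⟨C, hC⟩ := (((isCompact_Icc (a := a) (b := b)).prod isCompact_Icc).exists_bound_of_continuousOn hk)
  intro θ₀ hθ₀
  have huIoc : Set.uIoc c d = Set.Ioc c d := Set.uIoc_of_le hcd
  apply intervalIntegral.continuousWithinAt_of_dominated_interval (bound := fun _ => C)
  · filter_upwards [self_mem_nhdsWithin] with x hx
    have hsec : ContinuousOn (fun φ => k (x, φ)) (Set.Icc c d) :=
      hk.comp ((continuous_const.prodMk continuous_id).continuousOn)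
        (fun φ hφ => ⟨hx, hφ⟩)
    rw [huIoc]
    exact (hsec.mono Set.Ioc_subset_Icc_self).aestronglyMeasurable measurableSet_Ioc
  · filter_upwards [self_mem_nhdsWithin] with x hx
    refine MeasureTheory.ae_of_all _ fun t ht => ?_
    rw [huIoc] at ht
    exact hC (x, t) ⟨hx, Set.Ioc_subset_Icc_self ht⟩
  · exact intervalIntegrable_const
  · refine MeasureTheory.ae_of_all _ fun t ht => ?_
    rw [huIoc] at ht
    exact hk.comp ((continuous_id.prodMk continuous_const).continuousOn)
      (fun x hx => ⟨hx, Set.Ioc_subset_Icc_self ht⟩) θ₀ hθ₀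

lemma bounded_of_props {g : ℝ → ℝ → ℂ} (hsm : ContinuousOn (unc g) Udom)
    (hper : ∀ θ φ, g θ (φ + 2 * Real.pi) = g θ φ) (hpol : ExtendsToPoles g) :
    ∃ K : ℝ, 0 ≤ K ∧ ∀ θ ∈ Set.Ioo 0 Real.pi, ∀ φ : ℝ, ‖g θ φ‖ ≤ K := by
  obtain ⟨⟨c0, h0⟩, ⟨c1, h1⟩⟩ := hpol
  obtain ⟨δ0, hδ0, hb0⟩ := h0 1 one_pos
  obtain ⟨δ1, hδ1, hb1⟩ := h1 1 one_pos
  have hπ := Real.pi_pos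
  set a := min (δ0 / 2) (Real.pi / 2) with ha_def
  set b := Real.pi - min (δ1 / 2) (Real.pi / 4) with hb_def
  have ha_pos : 0 < a := lt_min (by linarith) (by linarith)
  have hab : a ≤ b := by
    have h1' : a ≤ Real.pi / 2 := min_le_right _ _
    have h2' : min (δ1 / 2) (Real.pi / 4) ≤ Real.pi / 4 := min_le_right _ _
    simp only [hb_def]; linarith
  have hbπ : b < Real.pi := by
    have : 0 < min (δ1 / 2) (Real.pi / 4) := lt_min (by linarith) (by linarith)
    simp only [hb_def]; linarith
  have hsub : Set.Icc a b ×ˢ Set.Icc 0 (2 * Real.pi) ⊆ Udom := by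
    rintro ⟨θ, φ⟩ ⟨hθ, _⟩
    exact ⟨⟨lt_of_lt_of_le ha_pos hθ.1, lt_of_le_of_lt hθ.2 hbπ⟩, trivial⟩
  obtain ⟨C, hC⟩ := ((isCompact_Icc.prod isCompact_Icc).exists_bound_of_continuousOn
    (hsm.mono hsub))
  refine ⟨max C (max (‖c0‖ + 1) (‖c1‖ + 1)), le_max_of_le_right (le_max_of_le_left (by positivity)), ?_⟩
  intro θ hθ φ
  rcases lt_or_ge θ a with hlt | hge
  · have hθδ : θ ∈ Set.Ioo 0 δ0 := ⟨hθ.1, lt_of_lt_of_le hlt (by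
      calc a ≤ δ0 / 2 := min_le_left _ _
      _ ≤ δ0 := by linarith)⟩
    have := hb0 θ hθδ φ
    calc ‖g θ φ‖ = ‖g θ φ - c0 + c0‖ := by rw [sub_add_cancel]
    _ ≤ ‖g θ φ - c0‖ + ‖c0‖ := norm_add_le _ _
    _ ≤ ‖c0‖ + 1 := by linarith
    _ ≤ _ := le_max_of_le_right (le_max_left _ _)
  rcases lt_or_ge b θ with hgt | hle
  · have hθδ : θ ∈ Set.Ioo (Real.pi - δ1) Real.pi := by
      constructor
      · have : min (δ1 / 2) (Real.pi / 4) ≤ δ1 / 2 := min_le_left _ _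
        simp only [hb_def] at hgt; linarith
      · exact hθ.2
    have := hb1 θ hθδ φ
    calc ‖g θ φ‖ = ‖g θ φ - c1 + c1‖ := by rw [sub_add_cancel]
    _ ≤ ‖g θ φ - c1‖ + ‖c1‖ := norm_add_le _ _
    _ ≤ ‖c1‖ + 1 := by linarith
    _ ≤ _ := le_max_of_le_right (le_max_right _ _)
  · have hper' : Function.Periodic (g θ) (2 * Real.pi) := fun x => hper θ x
    obtain ⟨y, hy, hyeq⟩ := hper'.exists_mem_Ico Real.two_pi_pos φ (0 : ℝ)
    rw [hyeq]
    refine le_max_of_le_left (hC (θ, y) ⟨⟨hge, hle⟩, ?_⟩)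
    rw [zero_add] at hy
    exact Set.Ico_subset_Icc_self hy

/-- the `(-is cscθ - cotθ ∂φ)` part of the `Ztilde` fields -/
def Dexpr (s : ℤ) (g : ℝ → ℝ → ℂ) : ℝ → ℝ → ℂ := fun θ φ =>
  (-Complex.I * (s : ℂ) / (Real.sin θ : ℂ)) * g θ φ -
    ((Real.cos θ / Real.sin θ : ℝ) : ℂ) * pdPhi g θ φ

lemma sin_sq_add_cos_sq_complex (x : ℝ) :
    ((Real.sin x : ℂ))^2 + ((Real.cos x : ℂ))^2 = 1 := by
  rw [← Complex.ofReal_pow, ← Complex.ofReal_pow, ← Complex.ofReal_add,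
    Real.sin_sq_add_cos_sq, Complex.ofReal_one]

lemma A_identity (s : ℤ) (g : ℝ → ℝ → ℂ) (θ φ : ℝ) :
    pdTheta g θ φ = -((Real.sin φ : ℂ) * Ztilde1 s g θ φ) -
      (Real.cos φ : ℂ) * Ztilde2 s g θ φ := by
  simp only [Ztilde1, Ztilde2, Dexpr]
  linear_combination (-(pdTheta g θ φ)) * sin_sq_add_cos_sq_complex φ

lemma D_identity (s : ℤ) (g : ℝ → ℝ → ℂ) (θ φ : ℝ) :
    Dexpr s g θ φ = (Real.cos φ : ℂ) * Ztilde1 s g θ φ -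
      (Real.sin φ : ℂ) * Ztilde2 s g θ φ := by
  simp only [Ztilde1, Ztilde2, Dexpr]
  linear_combination (-Complex.I * (s : ℂ) / (Real.sin θ : ℂ) * g θ φ -
    ((Real.cos θ / Real.sin θ : ℝ) : ℂ) * pdPhi g θ φ) * (sin_sq_add_cos_sq_complex φ).symm

end Helpers

/-- `C = ∂φΞ + is cosθ Ξ` -/
def Cfun (s : ℤ) (g : ℝ → ℝ → ℂ) : ℝ → ℝ → ℂ := fun θ φ =>
  pdPhi g θ φ + (s : ℂ) * Complex.I * (Real.cos θ : ℂ) * g θ φ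

/-- `Q = C / sinθ` -/
def Qfun (s : ℤ) (g : ℝ → ℝ → ℂ) : ℝ → ℝ → ℂ := fun θ φ =>
  Cfun s g θ φ / (Real.sin θ : ℂ)

/-- the spinorial-gradient energy density (with measure factor) -/
def RHSint (s : ℤ) (g : ℝ → ℝ → ℂ) : ℝ → ℝ → ℝ := fun θ φ =>
  ‖pdTheta g θ φ‖ ^ 2 * Real.sin θ + ‖Cfun s g θ φ‖ ^ 2 / Real.sin θ

def Posf (s : ℤ) (g : ℝ → ℝ → ℂ) : ℝ → ℝ → ℝ := fun θ φ =>
  ‖pdTheta g θ φ + ((s : ℂ) / 2) * Complex.I * Qfun s g θ φ‖ ^ 2 * Real.sin θ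

def Wfun (g : ℝ → ℝ → ℂ) : ℝ → ℝ → ℝ := fun θ φ =>
  Complex.normSq (g θ φ) * Real.sin θ

section MoreIds

lemma sinθ_ne {θ : ℝ} (hθ : θ ∈ Set.Ioo 0 Real.pi) : Real.sin θ ≠ 0 :=
  ne_of_gt (Real.sin_pos_of_pos_of_lt_pi hθ.1 hθ.2)

lemma sinθ_neC {θ : ℝ} (hθ : θ ∈ Set.Ioo 0 Real.pi) : (Real.sin θ : ℂ) ≠ 0 := by
  exact_mod_cast sinθ_ne hθ

lemma Q_identity (s : ℤ) (g : ℝ → ℝ → ℂ) {θ : ℝ} (hθ : θ ∈ Set.Ioo 0 Real.pi) (φ : ℝ) :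
    Qfun s g θ φ = (Real.sin θ : ℂ) * pdPhi g θ φ - (Real.cos θ : ℂ) * Dexpr s g θ φ := by
  have hne := sinθ_neC hθ
  have hsq := sin_sq_add_cos_sq_complex θ
  simp only [Qfun, Cfun, Dexpr, Complex.ofReal_div]
  generalize hK : ((Real.cos θ : ℝ) : ℂ) = K at hsq ⊢
  generalize hS : ((Real.sin θ : ℝ) : ℂ) = S at hne hsq ⊢
  field_simp
  first
  | linear_combination (-(pdPhi g θ φ)) * hsq
  | linear_combination (pdPhi g θ φ) * hsq
  | linear_combination (-(pdPhi g θ φ) * S) * hsq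
  | linear_combination (pdPhi g θ φ * S) * hsq
  | linear_combination (pdPhi g θ φ * S^2) * hsq
  | linear_combination (-(pdPhi g θ φ) * S^2) * hsq
  | ring

lemma pole_identity (s : ℤ) (g : ℝ → ℝ → ℂ) {θ : ℝ} (hθ : θ ∈ Set.Ioo 0 Real.pi) (φ : ℝ) :
    Complex.I * (s : ℂ) * g θ φ =
      -(Real.sin θ : ℂ) * Dexpr s g θ φ - (Real.cos θ : ℂ) * pdPhi g θ φ := by
  have hne := sinθ_neC hθ
  simp only [Dexpr, Complex.ofReal_div]
  generalize hK : ((Real.cos θ : ℝ) : ℂ) = K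
  generalize hS : ((Real.sin θ : ℝ) : ℂ) = S at hne ⊢
  field_simp
  ring

lemma lhs_pointwise (s : ℤ) (hs : s = 2 ∨ s = -2) (b x : ℂ) {sθ cθ : ℝ}
    (h0 : 0 < sθ) (h1 : sθ ≤ 1) (hc : |cθ| ≤ 1) :
    (1/8) * (‖b‖^2 * sθ) ≤
      (1/4) * (‖b + (s:ℂ) * Complex.I * (cθ:ℂ) * x‖^2 / sθ) + Complex.normSq x * sθ := by
  set C := b + (s:ℂ) * Complex.I * (cθ:ℂ) * x with hC
  have hb : b = C - (s:ℂ) * Complex.I * (cθ:ℂ) * x := by rw [hC]; ring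
  have hnorms : ‖(s:ℂ) * Complex.I * (cθ:ℂ) * x‖ = 2 * (|cθ| * ‖x‖) := by
    rcases hs with rfl | rfl <;>
      simp [norm_mul, Complex.norm_I, Complex.norm_real, Real.norm_eq_abs] <;> ring
  have hnb : ‖b‖ ≤ ‖C‖ + 2 * ‖x‖ := by
    calc ‖b‖ ≤ ‖C‖ + ‖(s:ℂ) * Complex.I * (cθ:ℂ) * x‖ := by rw [hb]; exact norm_sub_le _ _
    _ ≤ ‖C‖ + 2 * ‖x‖ := by
        rw [hnorms]
        have : |cθ| * ‖x‖ ≤ 1 * ‖x‖ := mul_le_mul_of_nonneg_right hc (norm_nonneg x)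
        nlinarith
  have hx2 : Complex.normSq x = ‖x‖^2 := by
    rw [Complex.normSq_eq_norm_sq]
  have hss : sθ * sθ ≤ 1 := by nlinarith
  have hdiv : ‖C‖^2 * sθ ≤ ‖C‖^2 / sθ := by
    rw [le_div_iff₀ h0]
    nlinarith [mul_nonneg (sq_nonneg (‖C‖)) (sub_nonneg.mpr hss)]
  have hsq : ‖b‖^2 ≤ 2 * ‖C‖^2 + 8 * ‖x‖^2 := by
    nlinarith [norm_nonneg b, norm_nonneg C, norm_nonneg x, sq_nonneg (‖C‖ - 2 * ‖x‖)]
  rw [hx2]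
  nlinarith [norm_nonneg b, norm_nonneg C, norm_nonneg x]

lemma pdTheta_periodic {g : ℝ → ℝ → ℂ} (hper : ∀ θ φ, g θ (φ + 2 * Real.pi) = g θ φ)
    (θ φ : ℝ) : pdTheta g θ (φ + 2 * Real.pi) = pdTheta g θ φ := by
  simp only [pdTheta, hper]

lemma pdPhi_periodic {g : ℝ → ℝ → ℂ} (hper : ∀ θ φ, g θ (φ + 2 * Real.pi) = g θ φ)
    (θ φ : ℝ) : pdPhi g θ (φ + 2 * Real.pi) = pdPhi g θ φ := by
  have h1 : pdPhi g θ (φ + 2 * Real.pi) = deriv (fun y => g θ (y + 2 * Real.pi)) φ := by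
    simp only [pdPhi]
    rw [deriv_comp_add_const]
  rw [h1]
  simp only [hper]
  rfl

end MoreIds

section ContOn

variable {s : ℤ} {g : ℝ → ℝ → ℂ} (hg : ContDiffOn ℝ (⊤ : ℕ∞) (unc g) Udom)
include hg

lemma contOn_sinC : ContinuousOn (fun p : ℝ × ℝ => ((Real.sin p.1 : ℂ))) Udom :=
  (Complex.continuous_ofReal.comp (Real.continuous_sin.comp continuous_fst)).continuousOn

lemma contOn_Cfun : ContinuousOn (fun p : ℝ × ℝ => Cfun s g p.1 p.2) Udom := by
  refine (contOn_pdPhi hg).add ?_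
  exact (continuousOn_const.mul
    ((Complex.continuous_ofReal.comp (Real.continuous_cos.comp continuous_fst)).continuousOn)).mul
    (contOn_unc hg)

lemma contOn_Qfun : ContinuousOn (fun p : ℝ × ℝ => Qfun s g p.1 p.2) Udom := by
  exact (contOn_Cfun hg).div (contOn_sinC hg) (fun p hp => sinθ_neC hp.1)

lemma contOn_RHSint : ContinuousOn (fun p : ℝ × ℝ => RHSint s g p.1 p.2) Udom := by
  refine ContinuousOn.add ?_ ?_
  · exact ((((contOn_pdTheta hg).norm).pow 2).mul
      ((Real.continuous_sin.comp continuous_fst).continuousOn))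
  · exact (((contOn_Cfun hg).norm).pow 2).div
      ((Real.continuous_sin.comp continuous_fst).continuousOn) (fun p hp => sinθ_ne hp.1)

lemma contOn_LHSint : ContinuousOn (fun p : ℝ × ℝ => ‖pdPhi g p.1 p.2‖^2 * Real.sin p.1) Udom :=
  (((contOn_pdPhi hg).norm).pow 2).mul ((Real.continuous_sin.comp continuous_fst).continuousOn)

lemma contOn_Posf : ContinuousOn (fun p : ℝ × ℝ => Posf s g p.1 p.2) Udom := by
  refine ContinuousOn.mul ?_ ((Real.continuous_sin.comp continuous_fst).continuousOn)
  exact (((contOn_pdTheta hg).add (continuousOn_const.mul (contOn_Qfun hg))).norm).pow 2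

lemma contOn_Wfun : ContinuousOn (fun p : ℝ × ℝ => Wfun g p.1 p.2) Udom := by
  refine ContinuousOn.mul ?_ ((Real.continuous_sin.comp continuous_fst).continuousOn)
  exact Complex.continuous_normSq.comp_continuousOn (contOn_unc hg)

lemma contOn_Gfun : ContinuousOn (fun p : ℝ × ℝ => Gfun s g p.1 p.2) Udom := by
  refine ContinuousOn.add ?_ ?_
  · exact Complex.continuous_im.comp_continuousOn
      ((Complex.continuous_conj.comp_continuousOn (contOn_unc hg)).mul (contOn_pdPhi hg))
  · exact (continuousOn_const.mul
      ((Real.continuous_cos.comp continuous_fst).continuousOn)).mul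
      (Complex.continuous_normSq.comp_continuousOn (contOn_unc hg))

lemma contOn_DGfun : ContinuousOn (fun p : ℝ × ℝ => DGfun s g p.1 p.2) Udom := by
  refine ContinuousOn.add (ContinuousOn.add ?_ ?_) ?_
  · exact Complex.continuous_im.comp_continuousOn
      ((Complex.continuous_conj.comp_continuousOn (contOn_pdTheta hg)).mul (contOn_pdPhi hg))
  · exact Complex.continuous_im.comp_continuousOn
      ((Complex.continuous_conj.comp_continuousOn (contOn_unc hg)).mul
        ((contOn_mixed hg).congr (fun p hp => by exact rfl)))
  · refine continuousOn_const.mul (ContinuousOn.add ?_ ?_)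
    · exact ((Real.continuous_sin.comp continuous_fst).neg.continuousOn).mul
        (Complex.continuous_normSq.comp_continuousOn (contOn_unc hg))
    · exact ((Real.continuous_cos.comp continuous_fst).continuousOn).mul
        (continuousOn_const.mul (Complex.continuous_re.comp_continuousOn
          ((Complex.continuous_conj.comp_continuousOn (contOn_unc hg)).mul (contOn_pdTheta hg))))

lemma contOn_DHfun : ContinuousOn (fun p : ℝ × ℝ => DHfun g p.1 p.2) Udom := by
  refine ContinuousOn.add ?_ ?_
  · exact Complex.continuous_im.comp_continuousOn
      ((Complex.continuous_conj.comp_continuousOn (contOn_pdPhi hg)).mul (contOn_pdTheta hg))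
  · exact Complex.continuous_im.comp_continuousOn
      ((Complex.continuous_conj.comp_continuousOn (contOn_unc hg)).mul
        ((contOn_mixed hg).congr (fun p hp => by exact rfl)))

end ContOn

section Main

/-- inner integrals -/
def Fth (s : ℤ) (Ξ : ℝ → ℝ → ℂ) : ℝ → ℝ := fun θ =>
  ∫ φ in (0:ℝ)..(2 * Real.pi), RHSint s Ξ θ φ
def Pth (s : ℤ) (Ξ : ℝ → ℝ → ℂ) : ℝ → ℝ := fun θ =>
  ∫ φ in (0:ℝ)..(2 * Real.pi), Posf s Ξ θ φ
def Wth (Ξ : ℝ → ℝ → ℂ) : ℝ → ℝ := fun θ =>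
  ∫ φ in (0:ℝ)..(2 * Real.pi), Wfun Ξ θ φ
def DGth (s : ℤ) (Ξ : ℝ → ℝ → ℂ) : ℝ → ℝ := fun θ =>
  ∫ φ in (0:ℝ)..(2 * Real.pi), DGfun s Ξ θ φ
def Mth (s : ℤ) (Ξ : ℝ → ℝ → ℂ) : ℝ → ℝ := fun θ =>
  ∫ φ in (0:ℝ)..(2 * Real.pi), Gfun s Ξ θ φ
def Lth (Ξ : ℝ → ℝ → ℂ) : ℝ → ℝ := fun θ =>
  ∫ φ in (0:ℝ)..(2 * Real.pi), ‖pdPhi Ξ θ φ‖ ^ 2 * Real.sin θ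

variable {s : ℤ} {Ξ : ℝ → ℝ → ℂ} (hΞ : SmoothSpinWeighted s Ξ)
include hΞ

lemma hsmΞ : ContDiffOn ℝ (⊤ : ℕ∞) (unc Ξ) Udom := (hΞ Ξ .base).1

lemma hperΞ : ∀ θ φ, Ξ θ (φ + 2 * Real.pi) = Ξ θ φ := (hΞ Ξ .base).2.1

lemma KXi_bound : ∃ K, 0 ≤ K ∧ ∀ θ ∈ Set.Ioo 0 Real.pi, ∀ φ, ‖Ξ θ φ‖ ≤ K := by
  obtain ⟨h1, h2, h3⟩ := hΞ Ξ .base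
  exact bounded_of_props (g := Ξ) h1.continuousOn h2 h3

lemma KB_bound : ∃ K, 0 ≤ K ∧ ∀ θ ∈ Set.Ioo 0 Real.pi, ∀ φ, ‖pdPhi Ξ θ φ‖ ≤ K := by
  obtain ⟨h1, h2, h3⟩ := hΞ _ (.z3 .base)
  exact bounded_of_props (g := Ztilde3 Ξ) h1.continuousOn h2 h3

lemma KD_bound : ∃ K, 0 ≤ K ∧ ∀ θ ∈ Set.Ioo 0 Real.pi, ∀ φ, ‖Dexpr s Ξ θ φ‖ ≤ K := by
  obtain ⟨h1, h2, h3⟩ := hΞ _ (.z1 .base)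
  obtain ⟨K1, hK1pos, hK1⟩ := bounded_of_props (g := Ztilde1 s Ξ) h1.continuousOn h2 h3
  obtain ⟨g1, g2, g3⟩ := hΞ _ (.z2 .base)
  obtain ⟨K2, hK2pos, hK2⟩ := bounded_of_props (g := Ztilde2 s Ξ) g1.continuousOn g2 g3
  refine ⟨K1 + K2, by linarith, fun θ hθ φ => ?_⟩
  rw [D_identity s Ξ θ φ]
  calc ‖(Real.cos φ : ℂ) * Ztilde1 s Ξ θ φ - (Real.sin φ : ℂ) * Ztilde2 s Ξ θ φ‖
      ≤ ‖(Real.cos φ : ℂ) * Ztilde1 s Ξ θ φ‖ + ‖(Real.sin φ : ℂ) * Ztilde2 s Ξ θ φ‖ :=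
        norm_sub_le _ _
    _ ≤ K1 + K2 := by
        rw [norm_mul, norm_mul]
        have e1 : ‖((Real.cos φ : ℝ) : ℂ)‖ ≤ 1 := by
          rw [Complex.norm_real, Real.norm_eq_abs]; exact Real.abs_cos_le_one φ
        have e2 : ‖((Real.sin φ : ℝ) : ℂ)‖ ≤ 1 := by
          rw [Complex.norm_real, Real.norm_eq_abs]; exact Real.abs_sin_le_one φ
        have b1 := hK1 θ hθ φ
        have b2 := hK2 θ hθ φ
        have n1 := norm_nonneg (Ztilde1 s Ξ θ φ)
        have n2 := norm_nonneg (Ztilde2 s Ξ θ φ)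
        nlinarith

lemma KA_bound : ∃ K, 0 ≤ K ∧ ∀ θ ∈ Set.Ioo 0 Real.pi, ∀ φ, ‖pdTheta Ξ θ φ‖ ≤ K := by
  obtain ⟨h1, h2, h3⟩ := hΞ _ (.z1 .base)
  obtain ⟨K1, hK1pos, hK1⟩ := bounded_of_props (g := Ztilde1 s Ξ) h1.continuousOn h2 h3
  obtain ⟨g1, g2, g3⟩ := hΞ _ (.z2 .base)
  obtain ⟨K2, hK2pos, hK2⟩ := bounded_of_props (g := Ztilde2 s Ξ) g1.continuousOn g2 g3
  refine ⟨K1 + K2, by linarith, fun θ hθ φ => ?_⟩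
  rw [A_identity s Ξ θ φ]
  calc ‖-((Real.sin φ : ℂ) * Ztilde1 s Ξ θ φ) - (Real.cos φ : ℂ) * Ztilde2 s Ξ θ φ‖
      ≤ ‖-((Real.sin φ : ℂ) * Ztilde1 s Ξ θ φ)‖ + ‖(Real.cos φ : ℂ) * Ztilde2 s Ξ θ φ‖ :=
        norm_sub_le _ _
    _ ≤ K1 + K2 := by
        rw [norm_neg, norm_mul, norm_mul]
        have e1 : ‖((Real.cos φ : ℝ) : ℂ)‖ ≤ 1 := by
          rw [Complex.norm_real, Real.norm_eq_abs]; exact Real.abs_cos_le_one φ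
        have e2 : ‖((Real.sin φ : ℝ) : ℂ)‖ ≤ 1 := by
          rw [Complex.norm_real, Real.norm_eq_abs]; exact Real.abs_sin_le_one φ
        have b1 := hK1 θ hθ φ
        have b2 := hK2 θ hθ φ
        have n1 := norm_nonneg (Ztilde1 s Ξ θ φ)
        have n2 := norm_nonneg (Ztilde2 s Ξ θ φ)
        nlinarith

lemma KQ_bound : ∃ K, 0 ≤ K ∧ ∀ θ ∈ Set.Ioo 0 Real.pi, ∀ φ, ‖Qfun s Ξ θ φ‖ ≤ K := by
  obtain ⟨KB, hKB0, hKB⟩ := KB_bound hΞ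
  obtain ⟨KD, hKD0, hKD⟩ := KD_bound hΞ
  refine ⟨KB + KD, by linarith, fun θ hθ φ => ?_⟩
  rw [Q_identity s Ξ hθ φ]
  calc ‖(Real.sin θ : ℂ) * pdPhi Ξ θ φ - (Real.cos θ : ℂ) * Dexpr s Ξ θ φ‖
      ≤ ‖(Real.sin θ : ℂ) * pdPhi Ξ θ φ‖ + ‖(Real.cos θ : ℂ) * Dexpr s Ξ θ φ‖ := norm_sub_le _ _
    _ ≤ KB + KD := by
        rw [norm_mul, norm_mul]
        have e1 : ‖((Real.sin θ : ℝ) : ℂ)‖ ≤ 1 := by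
          rw [Complex.norm_real, Real.norm_eq_abs]; exact Real.abs_sin_le_one θ
        have e2 : ‖((Real.cos θ : ℝ) : ℂ)‖ ≤ 1 := by
          rw [Complex.norm_real, Real.norm_eq_abs]; exact Real.abs_cos_le_one θ
        have b1 := hKB θ hθ φ
        have b2 := hKD θ hθ φ
        have n1 := norm_nonneg (pdPhi Ξ θ φ)
        have n2 := norm_nonneg (Dexpr s Ξ θ φ)
        nlinarith

lemma int_pdPhi_zero {θ : ℝ} (hθ : θ ∈ Set.Ioo 0 Real.pi) :
    (∫ φ in (0:ℝ)..(2 * Real.pi), pdPhi Ξ θ φ) = 0 := by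
  have hsm := hsmΞ hΞ
  have hd : ∀ φ ∈ Set.uIcc (0:ℝ) (2 * Real.pi), HasDerivAt (fun q => Ξ θ q) (pdPhi Ξ θ φ) φ :=
    fun φ _ => by rw [pdPhi_eq hsm hθ]; exact hasDerivAt_phi hsm hθ
  have hint : IntervalIntegrable (fun φ => pdPhi Ξ θ φ) MeasureTheory.volume 0 (2 * Real.pi) := by
    have := cont_section (contOn_pdPhi hsm) hθ
    exact this.intervalIntegrable _ _
  rw [intervalIntegral.integral_eq_sub_of_hasDerivAt hd hint]
  have : Ξ θ (2 * Real.pi) = Ξ θ 0 := by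
    have := hperΞ hΞ θ 0
    rw [zero_add] at this
    exact this
  rw [this, sub_self]

end Main

section PoleSmall

variable {s : ℤ} {Ξ : ℝ → ℝ → ℂ} (hs : s = 2 ∨ s = -2) (hΞ : SmoothSpinWeighted s Ξ)
include hΞ

lemma B_small_0 : ∀ ε > 0, ∃ δ > 0, ∀ θ ∈ Set.Ioo 0 δ, ∀ φ, ‖pdPhi Ξ θ φ‖ < ε := by
  have hπ := Real.pi_pos
  obtain ⟨c3, h0⟩ := (hΞ _ (.z3 .base)).2.2.1
  have hc3 : ∀ ε > 0, ‖c3‖ ≤ ε := by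
    intro ε hε
    obtain ⟨δ, hδ, hcl⟩ := h0 ε hε
    set θ0 := min (δ/2) (Real.pi/2) with hθ0
    have hθ0pos : 0 < θ0 := lt_min (by linarith) (by linarith)
    have hθ0Ioo : θ0 ∈ Set.Ioo 0 Real.pi :=
      ⟨hθ0pos, lt_of_le_of_lt (min_le_right _ _) (by linarith)⟩
    have hθ0δ : θ0 ∈ Set.Ioo 0 δ :=
      ⟨hθ0pos, lt_of_le_of_lt (min_le_left _ _) (by linarith)⟩
    have hint0 := int_pdPhi_zero hΞ hθ0Ioo
    have hcont : IntervalIntegrable (fun φ => pdPhi Ξ θ0 φ) MeasureTheory.volume 0 (2*Real.pi) :=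
      (cont_section (contOn_pdPhi (hsmΞ hΞ)) hθ0Ioo).intervalIntegrable _ _
    have hsub : (∫ φ in (0:ℝ)..(2*Real.pi), (c3 - pdPhi Ξ θ0 φ)) = (2*Real.pi) • c3 := by
      rw [intervalIntegral.integral_sub intervalIntegrable_const hcont, hint0,
        intervalIntegral.integral_const, sub_zero, sub_zero]
    have hbnd : ‖∫ φ in (0:ℝ)..(2*Real.pi), (c3 - pdPhi Ξ θ0 φ)‖ ≤ ε * |2*Real.pi - 0| := by
      apply intervalIntegral.norm_integral_le_of_norm_le_const
      intro x hx
      rw [norm_sub_rev]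
      exact le_of_lt (hcl θ0 hθ0δ x)
    rw [hsub] at hbnd
    rw [norm_smul, Real.norm_eq_abs] at hbnd
    have h2π : |2*Real.pi| = 2*Real.pi := abs_of_pos (by linarith)
    rw [h2π] at hbnd
    rw [sub_zero, h2π] at hbnd
    nlinarith [norm_nonneg c3]
  have hc30 : c3 = 0 := by
    have : ‖c3‖ ≤ 0 := le_of_forall_pos_le_add (fun ε hε => by
      simpa using hc3 ε hε)
    exact norm_le_zero_iff.mp this
  intro ε hε
  obtain ⟨δ, hδ, hcl⟩ := h0 ε hε
  exact ⟨δ, hδ, fun θ hθ φ => by simpa [hc30, Ztilde3] using hcl θ hθ φ⟩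

lemma B_small_pi : ∀ ε > 0, ∃ δ > 0, ∀ θ ∈ Set.Ioo (Real.pi - δ) Real.pi, ∀ φ,
    ‖pdPhi Ξ θ φ‖ < ε := by
  have hπ := Real.pi_pos
  obtain ⟨c3, h0⟩ := (hΞ _ (.z3 .base)).2.2.2
  have hc3 : ∀ ε > 0, ‖c3‖ ≤ ε := by
    intro ε hε
    obtain ⟨δ, hδ, hcl⟩ := h0 ε hε
    set m := min (δ/2) (Real.pi/2) with hm
    have hmpos : 0 < m := lt_min (by linarith) (by linarith)
    set θ0 := Real.pi - m with hθ0
    have hθ0Ioo : θ0 ∈ Set.Ioo 0 Real.pi := by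
      constructor
      · have : m ≤ Real.pi/2 := min_le_right _ _
        simp only [hθ0]; linarith
      · simp only [hθ0]; linarith
    have hθ0δ : θ0 ∈ Set.Ioo (Real.pi - δ) Real.pi := by
      constructor
      · have : m ≤ δ/2 := min_le_left _ _
        simp only [hθ0]; linarith
      · simp only [hθ0]; linarith
    have hint0 := int_pdPhi_zero hΞ hθ0Ioo
    have hcont : IntervalIntegrable (fun φ => pdPhi Ξ θ0 φ) MeasureTheory.volume 0 (2*Real.pi) :=
      (cont_section (contOn_pdPhi (hsmΞ hΞ)) hθ0Ioo).intervalIntegrable _ _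
    have hsub : (∫ φ in (0:ℝ)..(2*Real.pi), (c3 - pdPhi Ξ θ0 φ)) = (2*Real.pi) • c3 := by
      rw [intervalIntegral.integral_sub intervalIntegrable_const hcont, hint0,
        intervalIntegral.integral_const, sub_zero, sub_zero]
    have hbnd : ‖∫ φ in (0:ℝ)..(2*Real.pi), (c3 - pdPhi Ξ θ0 φ)‖ ≤ ε * |2*Real.pi - 0| := by
      apply intervalIntegral.norm_integral_le_of_norm_le_const
      intro x hx
      rw [norm_sub_rev]
      exact le_of_lt (hcl θ0 hθ0δ x)
    rw [hsub, norm_smul, Real.norm_eq_abs] at hbnd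
    have h2π : |2*Real.pi| = 2*Real.pi := abs_of_pos (by linarith)
    rw [sub_zero, h2π] at hbnd
    nlinarith [norm_nonneg c3]
  have hc30 : c3 = 0 := by
    have : ‖c3‖ ≤ 0 := le_of_forall_pos_le_add (fun ε hε => by simpa using hc3 ε hε)
    exact norm_le_zero_iff.mp this
  intro ε hε
  obtain ⟨δ, hδ, hcl⟩ := h0 ε hε
  exact ⟨δ, hδ, fun θ hθ φ => by simpa [hc30, Ztilde3] using hcl θ hθ φ⟩

include hs

lemma norm_sC : ‖(s : ℂ)‖ = 2 := by
  rcases hs with rfl | rfl <;> norm_num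

lemma Xi_small_0 : ∀ ε > 0, ∃ δ > 0, ∀ θ ∈ Set.Ioo 0 δ, ∀ φ, ‖Ξ θ φ‖ ≤ ε := by
  have hπ := Real.pi_pos
  obtain ⟨c, hc⟩ := (hΞ Ξ .base).2.2.1
  obtain ⟨KD, hKD0, hKD⟩ := KD_bound hΞ
  have hs2 := norm_sC hs hΞ
  have hcz : ∀ ε > 0, ‖c‖ ≤ ε := by
    intro ε hε
    obtain ⟨δB, hδB, hB⟩ := B_small_0 hΞ (ε/2) (by linarith)
    obtain ⟨δc, hδc, hcc⟩ := hc (ε/4) (by linarith)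
    set θ0 := min (min (δB/2) (δc/2)) (min (Real.pi/2) (ε/(2*(KD+1)))) with hθ0
    have hθ0pos : 0 < θ0 := by
      apply lt_min (lt_min (by linarith) (by linarith)) (lt_min (by linarith) (by positivity))
    have hθ0Ioo : θ0 ∈ Set.Ioo 0 Real.pi :=
      ⟨hθ0pos, lt_of_le_of_lt (le_trans (min_le_right _ _) (min_le_left _ _)) (by linarith)⟩
    have hθ0B : θ0 ∈ Set.Ioo 0 δB :=
      ⟨hθ0pos, lt_of_le_of_lt (le_trans (min_le_left _ _) (min_le_left _ _)) (by linarith)⟩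
    have hθ0c : θ0 ∈ Set.Ioo 0 δc :=
      ⟨hθ0pos, lt_of_le_of_lt (le_trans (min_le_left _ _) (min_le_right _ _)) (by linarith)⟩
    have hθ0ε : θ0 ≤ ε/(2*(KD+1)) := le_trans (min_le_right _ _) (min_le_right _ _)
    have hkey := pole_identity s Ξ hθ0Ioo 0
    have hnorm : ‖Complex.I * (s:ℂ) * Ξ θ0 0‖ = 2 * ‖Ξ θ0 0‖ := by
      rw [norm_mul, norm_mul, Complex.norm_I, hs2]; ring
    have hrhs : ‖-(Real.sin θ0 : ℂ) * Dexpr s Ξ θ0 0 - (Real.cos θ0 : ℂ) * pdPhi Ξ θ0 0‖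
        ≤ Real.sin θ0 * KD + ε/2 := by
      calc ‖-(Real.sin θ0 : ℂ) * Dexpr s Ξ θ0 0 - (Real.cos θ0 : ℂ) * pdPhi Ξ θ0 0‖
          ≤ ‖-(Real.sin θ0 : ℂ) * Dexpr s Ξ θ0 0‖ + ‖(Real.cos θ0 : ℂ) * pdPhi Ξ θ0 0‖ :=
            norm_sub_le _ _
        _ ≤ Real.sin θ0 * KD + ε/2 := by
            rw [norm_mul, norm_mul, norm_neg]
            have e1 : ‖((Real.sin θ0 : ℝ) : ℂ)‖ = Real.sin θ0 := by
              rw [Complex.norm_real, Real.norm_eq_abs,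
                abs_of_pos (Real.sin_pos_of_pos_of_lt_pi hθ0Ioo.1 hθ0Ioo.2)]
            have e2 : ‖((Real.cos θ0 : ℝ) : ℂ)‖ ≤ 1 := by
              rw [Complex.norm_real, Real.norm_eq_abs]; exact Real.abs_cos_le_one θ0
            have b1 := hKD θ0 hθ0Ioo 0
            have b2 := le_of_lt (hB θ0 hθ0B 0)
            have n2 := norm_nonneg (pdPhi Ξ θ0 0)
            have hsin0 : 0 ≤ Real.sin θ0 :=
              le_of_lt (Real.sin_pos_of_pos_of_lt_pi hθ0Ioo.1 hθ0Ioo.2)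
            rw [e1]
            nlinarith
    have hsinθ0 : Real.sin θ0 ≤ θ0 := Real.sin_le (le_of_lt hθ0pos)
    have hθKD : Real.sin θ0 * KD ≤ ε/2 := by
      have h1 : Real.sin θ0 * KD ≤ θ0 * KD := mul_le_mul_of_nonneg_right hsinθ0 hKD0
      have h2 : θ0 * KD ≤ (ε/(2*(KD+1))) * KD := mul_le_mul_of_nonneg_right hθ0ε hKD0
      have h3 : (ε/(2*(KD+1))) * KD ≤ ε/2 := by
        rw [div_mul_eq_mul_div, div_le_div_iff₀ (by positivity) (by norm_num)]
        nlinarith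
      linarith
    have hXi0 : ‖Ξ θ0 0‖ ≤ ε/2 := by
      have := hkey ▸ hnorm
      rw [hkey] at hnorm
      have := hnorm ▸ hrhs
      nlinarith [norm_nonneg (Ξ θ0 0), hrhs, hnorm.symm.le, hnorm.le]
    calc ‖c‖ ≤ ‖c - Ξ θ0 0‖ + ‖Ξ θ0 0‖ := by
          have : c = (c - Ξ θ0 0) + Ξ θ0 0 := by ring
          calc ‖c‖ = ‖(c - Ξ θ0 0) + Ξ θ0 0‖ := by rw [← this]
          _ ≤ ‖c - Ξ θ0 0‖ + ‖Ξ θ0 0‖ := norm_add_le _ _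
    _ ≤ ε/4 + ε/2 := by
          have := hcc θ0 hθ0c 0
          rw [norm_sub_rev] at this
          linarith
    _ ≤ ε := by linarith
  have hc0 : c = 0 := by
    have : ‖c‖ ≤ 0 := le_of_forall_pos_le_add (fun ε hε => by simpa using hcz ε hε)
    exact norm_le_zero_iff.mp this
  intro ε hε
  obtain ⟨δ, hδ, hcl⟩ := hc ε hε
  exact ⟨δ, hδ, fun θ hθ φ => by
    have := hcl θ hθ φ
    rw [hc0, sub_zero] at this
    exact le_of_lt this⟩

lemma Xi_small_pi : ∀ ε > 0, ∃ δ > 0, ∀ θ ∈ Set.Ioo (Real.pi - δ) Real.pi, ∀ φ,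
    ‖Ξ θ φ‖ ≤ ε := by
  have hπ := Real.pi_pos
  obtain ⟨c, hc⟩ := (hΞ Ξ .base).2.2.2
  obtain ⟨KD, hKD0, hKD⟩ := KD_bound hΞ
  have hs2 := norm_sC hs hΞ
  have hcz : ∀ ε > 0, ‖c‖ ≤ ε := by
    intro ε hε
    obtain ⟨δB, hδB, hB⟩ := B_small_pi hΞ (ε/2) (by linarith)
    obtain ⟨δc, hδc, hcc⟩ := hc (ε/4) (by linarith)
    set m := min (min (δB/2) (δc/2)) (min (Real.pi/2) (ε/(2*(KD+1)))) with hm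
    have hmpos : 0 < m := by
      apply lt_min (lt_min (by linarith) (by linarith)) (lt_min (by linarith) (by positivity))
    set θ0 := Real.pi - m with hθ0def
    have hmπ : m ≤ Real.pi/2 := le_trans (min_le_right _ _) (min_le_left _ _)
    have hθ0Ioo : θ0 ∈ Set.Ioo 0 Real.pi := ⟨by simp only [hθ0def]; linarith,
      by simp only [hθ0def]; linarith⟩
    have hθ0B : θ0 ∈ Set.Ioo (Real.pi - δB) Real.pi := by
      have : m ≤ δB/2 := le_trans (min_le_left _ _) (min_le_left _ _)
      exact ⟨by simp only [hθ0def]; linarith, by simp only [hθ0def]; linarith⟩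
    have hθ0c : θ0 ∈ Set.Ioo (Real.pi - δc) Real.pi := by
      have : m ≤ δc/2 := le_trans (min_le_left _ _) (min_le_right _ _)
      exact ⟨by simp only [hθ0def]; linarith, by simp only [hθ0def]; linarith⟩
    have hmε : m ≤ ε/(2*(KD+1)) := le_trans (min_le_right _ _) (min_le_right _ _)
    have hkey := pole_identity s Ξ hθ0Ioo 0
    have hnorm : ‖Complex.I * (s:ℂ) * Ξ θ0 0‖ = 2 * ‖Ξ θ0 0‖ := by
      rw [norm_mul, norm_mul, Complex.norm_I, hs2]; ring
    have hrhs : ‖-(Real.sin θ0 : ℂ) * Dexpr s Ξ θ0 0 - (Real.cos θ0 : ℂ) * pdPhi Ξ θ0 0‖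
        ≤ Real.sin θ0 * KD + ε/2 := by
      calc ‖-(Real.sin θ0 : ℂ) * Dexpr s Ξ θ0 0 - (Real.cos θ0 : ℂ) * pdPhi Ξ θ0 0‖
          ≤ ‖-(Real.sin θ0 : ℂ) * Dexpr s Ξ θ0 0‖ + ‖(Real.cos θ0 : ℂ) * pdPhi Ξ θ0 0‖ :=
            norm_sub_le _ _
        _ ≤ Real.sin θ0 * KD + ε/2 := by
            rw [norm_mul, norm_mul, norm_neg]
            have e1 : ‖((Real.sin θ0 : ℝ) : ℂ)‖ = Real.sin θ0 := by
              rw [Complex.norm_real, Real.norm_eq_abs,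
                abs_of_pos (Real.sin_pos_of_pos_of_lt_pi hθ0Ioo.1 hθ0Ioo.2)]
            have e2 : ‖((Real.cos θ0 : ℝ) : ℂ)‖ ≤ 1 := by
              rw [Complex.norm_real, Real.norm_eq_abs]; exact Real.abs_cos_le_one θ0
            have b1 := hKD θ0 hθ0Ioo 0
            have b2 := le_of_lt (hB θ0 hθ0B 0)
            have n2 := norm_nonneg (pdPhi Ξ θ0 0)
            have hsin0 : 0 ≤ Real.sin θ0 :=
              le_of_lt (Real.sin_pos_of_pos_of_lt_pi hθ0Ioo.1 hθ0Ioo.2)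
            rw [e1]
            nlinarith
    have hsinθ0 : Real.sin θ0 ≤ m := by
      have : Real.sin θ0 = Real.sin m := by
        rw [hθ0def, Real.sin_pi_sub]
      rw [this]
      exact Real.sin_le (le_of_lt hmpos)
    have hθKD : Real.sin θ0 * KD ≤ ε/2 := by
      have h1 : Real.sin θ0 * KD ≤ m * KD := mul_le_mul_of_nonneg_right hsinθ0 hKD0
      have h2 : m * KD ≤ (ε/(2*(KD+1))) * KD := mul_le_mul_of_nonneg_right hmε hKD0
      have h3 : (ε/(2*(KD+1))) * KD ≤ ε/2 := by
        rw [div_mul_eq_mul_div, div_le_div_iff₀ (by positivity) (by norm_num)]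
        nlinarith
      linarith
    have hXi0 : ‖Ξ θ0 0‖ ≤ ε/2 := by
      rw [hkey] at hnorm
      nlinarith [norm_nonneg (Ξ θ0 0), hrhs, hnorm.symm.le, hnorm.le]
    calc ‖c‖ ≤ ‖c - Ξ θ0 0‖ + ‖Ξ θ0 0‖ := by
          have heq : c = (c - Ξ θ0 0) + Ξ θ0 0 := by ring
          calc ‖c‖ = ‖(c - Ξ θ0 0) + Ξ θ0 0‖ := by rw [← heq]
          _ ≤ ‖c - Ξ θ0 0‖ + ‖Ξ θ0 0‖ := norm_add_le _ _
    _ ≤ ε/4 + ε/2 := by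
          have := hcc θ0 hθ0c 0
          rw [norm_sub_rev] at this
          linarith
    _ ≤ ε := by linarith
  have hc0 : c = 0 := by
    have : ‖c‖ ≤ 0 := le_of_forall_pos_le_add (fun ε hε => by simpa using hcz ε hε)
    exact norm_le_zero_iff.mp this
  intro ε hε
  obtain ⟨δ, hδ, hcl⟩ := hc ε hε
  exact ⟨δ, hδ, fun θ hθ φ => by
    have := hcl θ hθ φ
    rw [hc0, sub_zero] at this
    exact le_of_lt this⟩

end PoleSmall

section MSmall

variable {s : ℤ} {Ξ : ℝ → ℝ → ℂ} (hs : s = 2 ∨ s = -2) (hΞ : SmoothSpinWeighted s Ξ)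
include hs hΞ

lemma Gfun_bound {θ : ℝ} (hθ : θ ∈ Set.Ioo 0 Real.pi) {η KB : ℝ}
    (hη : ∀ φ, ‖Ξ θ φ‖ ≤ η) (hKB : ∀ φ, ‖pdPhi Ξ θ φ‖ ≤ KB) (hη1 : η ≤ 1) (hη0 : 0 ≤ η) :
    ∀ φ, |Gfun s Ξ θ φ| ≤ η * (KB + 2) := by
  intro φ
  have habs : |(s : ℝ)| = 2 := by rcases hs with rfl | rfl <;> norm_num
  have h1 : |((starRingEnd ℂ) (Ξ θ φ) * pdPhi Ξ θ φ).im| ≤ η * KB := by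
    calc |((starRingEnd ℂ) (Ξ θ φ) * pdPhi Ξ θ φ).im|
        ≤ ‖(starRingEnd ℂ) (Ξ θ φ) * pdPhi Ξ θ φ‖ := Complex.abs_im_le_norm _
      _ = ‖Ξ θ φ‖ * ‖pdPhi Ξ θ φ‖ := by rw [norm_mul, RCLike.norm_conj]
      _ ≤ η * KB := by
          have := hη φ; have := hKB φ
          have h0 := norm_nonneg (Ξ θ φ); have h0' := norm_nonneg (pdPhi Ξ θ φ)
          nlinarith
  have h2 : |(s : ℝ) * Real.cos θ * Complex.normSq (Ξ θ φ)| ≤ 2 * η := by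
    rw [abs_mul, abs_mul, habs]
    have hcos := Real.abs_cos_le_one θ
    have hns : |Complex.normSq (Ξ θ φ)| ≤ η := by
      rw [abs_of_nonneg (Complex.normSq_nonneg _), Complex.normSq_eq_norm_sq]
      have := hη φ
      nlinarith [norm_nonneg (Ξ θ φ)]
    nlinarith [abs_nonneg (Complex.normSq (Ξ θ φ)), abs_nonneg (Real.cos θ)]
  calc |Gfun s Ξ θ φ| ≤ |((starRingEnd ℂ) (Ξ θ φ) * pdPhi Ξ θ φ).im| +
        |(s : ℝ) * Real.cos θ * Complex.normSq (Ξ θ φ)| := abs_add_le _ _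
    _ ≤ η * KB + 2 * η := by linarith
    _ = η * (KB + 2) := by ring

lemma M_small : ∀ ε > 0, ∃ δ > 0, δ < Real.pi / 2 ∧
    (∀ θ ∈ Set.Ioo 0 δ, |Mth s Ξ θ| ≤ ε) ∧
    (∀ θ ∈ Set.Ioo (Real.pi - δ) Real.pi, |Mth s Ξ θ| ≤ ε) := by
  have hπ := Real.pi_pos
  obtain ⟨KB, hKB0, hKB⟩ := KB_bound hΞ
  intro ε hε
  set η := min 1 (ε / (2 * Real.pi * (KB + 2) + 1)) with hη_def
  have hη0 : 0 < η := lt_min one_pos (by positivity)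
  have hη1 : η ≤ 1 := min_le_left _ _
  have hηε : η * (KB + 2) ≤ ε / (2 * Real.pi) := by
    have h1 : η ≤ ε / (2 * Real.pi * (KB + 2) + 1) := min_le_right _ _
    have h2 : η * (KB + 2) ≤ (ε / (2 * Real.pi * (KB + 2) + 1)) * (KB + 2) :=
      mul_le_mul_of_nonneg_right h1 (by linarith)
    have h3 : (ε / (2 * Real.pi * (KB + 2) + 1)) * (KB + 2) ≤ ε / (2 * Real.pi) := by
      rw [div_mul_eq_mul_div, div_le_div_iff₀ (by positivity) (by positivity)]
      nlinarith
    linarith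
  obtain ⟨δ0, hδ0, hX0⟩ := Xi_small_0 hs hΞ η hη0
  obtain ⟨δ1, hδ1, hX1⟩ := Xi_small_pi hs hΞ η hη0
  refine ⟨min (min δ0 δ1) (Real.pi / 4), lt_min (lt_min hδ0 hδ1) (by linarith), by
    have : Real.pi / 4 < Real.pi / 2 := by linarith
    exact lt_of_le_of_lt (min_le_right _ _) this, ?_, ?_⟩
  · intro θ hθ
    have hθIoo : θ ∈ Set.Ioo 0 Real.pi := ⟨hθ.1, by
      have := lt_of_lt_of_le hθ.2 (le_trans (min_le_right _ _) (by linarith : Real.pi/4 ≤ Real.pi))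
      exact lt_of_lt_of_le hθ.2 (le_trans (min_le_right _ _) (by linarith))⟩
    have hθ0 : θ ∈ Set.Ioo 0 δ0 := ⟨hθ.1,
      lt_of_lt_of_le hθ.2 (le_trans (min_le_left _ _) (min_le_left _ _))⟩
    have hGb := Gfun_bound hs hΞ hθIoo (fun φ => hX0 θ hθ0 φ)
      (fun φ => hKB θ hθIoo φ) hη1 (le_of_lt hη0)
    have hMb : ‖Mth s Ξ θ‖ ≤ (ε / (2 * Real.pi)) * |2 * Real.pi - 0| := by
      apply intervalIntegral.norm_integral_le_of_norm_le_const
      intro x hx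
      rw [Real.norm_eq_abs]
      exact le_trans (hGb x) hηε
    rw [Real.norm_eq_abs] at hMb
    have h2π : |2 * Real.pi - 0| = 2 * Real.pi := by rw [sub_zero]; exact abs_of_pos (by linarith)
    rw [h2π] at hMb
    calc |Mth s Ξ θ| ≤ (ε / (2 * Real.pi)) * (2 * Real.pi) := hMb
      _ = ε := by field_simp
  · intro θ hθ
    have hθIoo : θ ∈ Set.Ioo 0 Real.pi := ⟨by
      have h1 : min (min δ0 δ1) (Real.pi / 4) ≤ Real.pi / 4 := min_le_right _ _
      have := hθ.1
      linarith, hθ.2⟩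
    have hθ1 : θ ∈ Set.Ioo (Real.pi - δ1) Real.pi := ⟨by
      have h1 : min (min δ0 δ1) (Real.pi / 4) ≤ δ1 := le_trans (min_le_left _ _) (min_le_right _ _)
      have := hθ.1
      linarith, hθ.2⟩
    have hGb := Gfun_bound hs hΞ hθIoo (fun φ => hX1 θ hθ1 φ)
      (fun φ => hKB θ hθIoo φ) hη1 (le_of_lt hη0)
    have hMb : ‖Mth s Ξ θ‖ ≤ (ε / (2 * Real.pi)) * |2 * Real.pi - 0| := by
      apply intervalIntegral.norm_integral_le_of_norm_le_const
      intro x hx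
      rw [Real.norm_eq_abs]
      exact le_trans (hGb x) hηε
    rw [Real.norm_eq_abs] at hMb
    have h2π : |2 * Real.pi - 0| = 2 * Real.pi := by rw [sub_zero]; exact abs_of_pos (by linarith)
    rw [h2π] at hMb
    calc |Mth s Ξ θ| ≤ (ε / (2 * Real.pi)) * (2 * Real.pi) := hMb
      _ = ε := by field_simp

end MSmall

section MainEq

variable {s : ℤ} {Ξ : ℝ → ℝ → ℂ} (hs : s = 2 ∨ s = -2) (hΞ : SmoothSpinWeighted s Ξ)
include hs hΞ

lemma RHSint_eq {θ : ℝ} (hθ : θ ∈ Set.Ioo 0 Real.pi) (φ : ℝ) :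
    RHSint s Ξ θ φ = Posf s Ξ θ φ +
      (((s:ℝ)/2) * (DGfun s Ξ θ φ - DHfun Ξ θ φ) + 2 * Wfun Ξ θ φ) := by
  have hsθ : 0 < Real.sin θ := Real.sin_pos_of_pos_of_lt_pi hθ.1 hθ.2
  have hkey := key_pointwise s hs (pdTheta Ξ θ φ) (pdPhi Ξ θ φ) (Ξ θ φ)
    (fd2 Ξ (θ, φ) ((1:ℝ), (0:ℝ)) ((0:ℝ), (1:ℝ))) (cθ := Real.cos θ) hsθ
  simp only [RHSint, Posf, Qfun, Cfun, Wfun, DGfun, DHfun]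
  linarith [hkey]

lemma Hfun_periodic_eq {θ : ℝ} :
    Hfun Ξ θ (2 * Real.pi) = Hfun Ξ θ 0 := by
  have h20 : (2 * Real.pi) = 0 + 2 * Real.pi := by ring
  simp only [Hfun]
  rw [h20, hperΞ hΞ, pdTheta_periodic (hperΞ hΞ)]

lemma intDH_zero {θ : ℝ} (hθ : θ ∈ Set.Ioo 0 Real.pi) :
    (∫ φ in (0:ℝ)..(2 * Real.pi), DHfun Ξ θ φ) = 0 := by
  have hsm := hsmΞ hΞ
  have hd : ∀ φ ∈ Set.uIcc (0:ℝ) (2 * Real.pi),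
      HasDerivAt (fun q => Hfun Ξ θ q) (DHfun Ξ θ φ) φ := fun φ _ => hasDerivAt_H hsm hθ
  have hint : IntervalIntegrable (fun φ => DHfun Ξ θ φ) MeasureTheory.volume 0 (2 * Real.pi) :=
    (cont_section (contOn_DHfun hsm) hθ).intervalIntegrable _ _
  rw [intervalIntegral.integral_eq_sub_of_hasDerivAt hd hint, Hfun_periodic_eq hs hΞ, sub_self]

lemma Fth_split {θ : ℝ} (hθ : θ ∈ Set.Ioo 0 Real.pi) :
    Fth s Ξ θ = Pth s Ξ θ + (((s:ℝ)/2) * DGth s Ξ θ + 2 * Wth Ξ θ) := by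
  have hsm := hsmΞ hΞ
  have hIP : IntervalIntegrable (fun φ => Posf s Ξ θ φ) MeasureTheory.volume 0 (2*Real.pi) :=
    (cont_section (contOn_Posf hsm) hθ).intervalIntegrable _ _
  have hIDG : IntervalIntegrable (fun φ => DGfun s Ξ θ φ) MeasureTheory.volume 0 (2*Real.pi) :=
    (cont_section (contOn_DGfun hsm) hθ).intervalIntegrable _ _
  have hIDH : IntervalIntegrable (fun φ => DHfun Ξ θ φ) MeasureTheory.volume 0 (2*Real.pi) :=
    (cont_section (contOn_DHfun hsm) hθ).intervalIntegrable _ _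
  have hIW : IntervalIntegrable (fun φ => Wfun Ξ θ φ) MeasureTheory.volume 0 (2*Real.pi) :=
    (cont_section (contOn_Wfun hsm) hθ).intervalIntegrable _ _
  have hEq : Set.EqOn (fun φ => RHSint s Ξ θ φ)
      (fun φ => Posf s Ξ θ φ + (((s:ℝ)/2) * (DGfun s Ξ θ φ - DHfun Ξ θ φ) + 2 * Wfun Ξ θ φ))
      (Set.uIcc 0 (2*Real.pi)) := fun φ _ => RHSint_eq hs hΞ hθ φ
  have step1 : Fth s Ξ θ = ∫ φ in (0:ℝ)..(2*Real.pi),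
      (Posf s Ξ θ φ + (((s:ℝ)/2) * (DGfun s Ξ θ φ - DHfun Ξ θ φ) + 2 * Wfun Ξ θ φ)) :=
    intervalIntegral.integral_congr hEq
  rw [step1]
  rw [intervalIntegral.integral_add hIP (((hIDG.sub hIDH).const_mul _).add (hIW.const_mul 2))]
  rw [intervalIntegral.integral_add ((hIDG.sub hIDH).const_mul _) (hIW.const_mul 2)]
  rw [intervalIntegral.integral_const_mul, intervalIntegral.integral_const_mul,
    intervalIntegral.integral_sub hIDG hIDH, intDH_zero hs hΞ hθ, sub_zero]
  rfl

lemma Mth_hasDeriv {θ0 : ℝ} (hθ0 : θ0 ∈ Set.Ioo 0 Real.pi) :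
    HasDerivAt (Mth s Ξ) (DGth s Ξ θ0) θ0 := by
  have hsm := hsmΞ hΞ
  have hπ := Real.pi_pos
  set ε := min θ0 (Real.pi - θ0) / 2 with hε_def
  have hε : 0 < ε := by
    have h1 := hθ0.1; have h2 := hθ0.2
    have : 0 < min θ0 (Real.pi - θ0) := lt_min h1 (by linarith)
    linarith
  have hball : Metric.ball θ0 ε ⊆ Set.Ioo 0 Real.pi := by
    intro x hx
    rw [Metric.mem_ball, Real.dist_eq, abs_lt] at hx
    have hm1 : min θ0 (Real.pi - θ0) ≤ θ0 := min_le_left _ _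
    have hm2 : min θ0 (Real.pi - θ0) ≤ Real.pi - θ0 := min_le_right _ _
    constructor <;> [linarith [hx.1]; linarith [hx.2]]
  have hrect : Set.Icc (θ0 - ε) (θ0 + ε) ×ˢ Set.Icc 0 (2*Real.pi) ⊆ Udom := by
    rintro ⟨x, t⟩ ⟨hx, _⟩
    have hm1 : min θ0 (Real.pi - θ0) ≤ θ0 := min_le_left _ _
    have hm2 : min θ0 (Real.pi - θ0) ≤ Real.pi - θ0 := min_le_right _ _
    exact ⟨⟨by have := hx.1; have := hθ0.1; simp only [hε_def] at *; linarith,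
      by have := hx.2; have := hθ0.2; simp only [hε_def] at *; linarith⟩, trivial⟩
  obtain ⟨CD, hCD⟩ := ((isCompact_Icc.prod isCompact_Icc).exists_bound_of_continuousOn
    ((contOn_DGfun hsm).mono hrect))
  have hres := intervalIntegral.hasDerivAt_integral_of_dominated_loc_of_deriv_le
    (F := fun x φ => Gfun s Ξ x φ) (F' := fun x φ => DGfun s Ξ x φ)
    (bound := fun _ => CD) (a := 0) (b := 2*Real.pi) (μ := MeasureTheory.volume)
    (x₀ := θ0) (Metric.ball_mem_nhds θ0 hε) ?_ ?_ ?_ ?_ ?_ ?_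
  · exact hres.2
  · filter_upwards [isOpen_Ioo.mem_nhds hθ0] with x hx
    exact (cont_section (contOn_Gfun hsm) hx).aestronglyMeasurable
  · exact (cont_section (contOn_Gfun hsm) hθ0).intervalIntegrable _ _
  · exact (cont_section (contOn_DGfun hsm) hθ0).aestronglyMeasurable
  · refine MeasureTheory.ae_of_all _ fun t ht x hx => ?_
    have hxI : x ∈ Set.Icc (θ0 - ε) (θ0 + ε) := by
      rw [Metric.mem_ball, Real.dist_eq, abs_lt] at hx
      exact ⟨by linarith [hx.1], by linarith [hx.2]⟩
    have htI : t ∈ Set.Icc 0 (2*Real.pi) := by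
      rw [Set.uIoc_of_le (by linarith : (0:ℝ) ≤ 2*Real.pi)] at ht
      exact Set.Ioc_subset_Icc_self ht
    exact hCD (x, t) ⟨hxI, htI⟩
  · exact intervalIntegrable_const
  · refine MeasureTheory.ae_of_all _ fun t ht x hx => ?_
    exact hasDerivAt_G hsm (hball hx)

lemma intDGth {a b : ℝ} (ha : 0 < a) (hab : a ≤ b) (hb : b < Real.pi) :
    (∫ θ in a..b, DGth s Ξ θ) = Mth s Ξ b - Mth s Ξ a := by
  have hsm := hsmΞ hΞ
  have hIcc : Set.Icc a b ⊆ Set.Ioo 0 Real.pi := fun x hx => ⟨lt_of_lt_of_le ha hx.1,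
    lt_of_le_of_lt hx.2 hb⟩
  have hrect : Set.Icc a b ×ˢ Set.Icc 0 (2*Real.pi) ⊆ Udom := by
    rintro ⟨x, t⟩ ⟨hx, _⟩; exact ⟨hIcc hx, trivial⟩
  have hderiv : ∀ θ ∈ Set.uIcc a b, HasDerivAt (Mth s Ξ) (DGth s Ξ θ) θ := by
    intro θ hθ
    rw [Set.uIcc_of_le hab] at hθ
    exact Mth_hasDeriv hs hΞ (hIcc hθ)
  have hint : IntervalIntegrable (DGth s Ξ) MeasureTheory.volume a b := by
    have hco : ContinuousOn (DGth s Ξ) (Set.uIcc a b) := by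
      rw [Set.uIcc_of_le hab]
      exact contOn_param Real.two_pi_pos.le ((contOn_DGfun hsm).mono hrect)
    exact hco.intervalIntegrable
  exact intervalIntegral.integral_eq_sub_of_hasDerivAt hderiv hint

lemma main_eq {a b : ℝ} (ha : 0 < a) (hab : a ≤ b) (hb : b < Real.pi) :
    (∫ θ in a..b, Fth s Ξ θ) = (∫ θ in a..b, Pth s Ξ θ) +
      ((s:ℝ)/2) * (Mth s Ξ b - Mth s Ξ a) + 2 * (∫ θ in a..b, Wth Ξ θ) := by
  have hsm := hsmΞ hΞ
  have hIcc : Set.Icc a b ⊆ Set.Ioo 0 Real.pi := fun x hx => ⟨lt_of_lt_of_le ha hx.1,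
    lt_of_le_of_lt hx.2 hb⟩
  have hrect : Set.Icc a b ×ˢ Set.Icc 0 (2*Real.pi) ⊆ Udom := by
    rintro ⟨x, t⟩ ⟨hx, _⟩; exact ⟨hIcc hx, trivial⟩
  have hIP : IntervalIntegrable (Pth s Ξ) MeasureTheory.volume a b := by
    have : ContinuousOn (Pth s Ξ) (Set.uIcc a b) := by
      rw [Set.uIcc_of_le hab]
      exact contOn_param Real.two_pi_pos.le ((contOn_Posf hsm).mono hrect)
    exact this.intervalIntegrable
  have hIDG : IntervalIntegrable (DGth s Ξ) MeasureTheory.volume a b := by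
    have : ContinuousOn (DGth s Ξ) (Set.uIcc a b) := by
      rw [Set.uIcc_of_le hab]
      exact contOn_param Real.two_pi_pos.le ((contOn_DGfun hsm).mono hrect)
    exact this.intervalIntegrable
  have hIW : IntervalIntegrable (Wth Ξ) MeasureTheory.volume a b := by
    have : ContinuousOn (Wth Ξ) (Set.uIcc a b) := by
      rw [Set.uIcc_of_le hab]
      exact contOn_param Real.two_pi_pos.le ((contOn_Wfun hsm).mono hrect)
    exact this.intervalIntegrable
  have hEq : Set.EqOn (Fth s Ξ)
      (fun θ => Pth s Ξ θ + (((s:ℝ)/2) * DGth s Ξ θ + 2 * Wth Ξ θ)) (Set.uIcc a b) := by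
    intro θ hθ
    rw [Set.uIcc_of_le hab] at hθ
    exact Fth_split hs hΞ (hIcc hθ)
  rw [intervalIntegral.integral_congr hEq]
  rw [intervalIntegral.integral_add hIP ((hIDG.const_mul _).add (hIW.const_mul 2))]
  rw [intervalIntegral.integral_add (hIDG.const_mul _) (hIW.const_mul 2)]
  rw [intervalIntegral.integral_const_mul, intervalIntegral.integral_const_mul,
    intDGth hs hΞ ha hab hb]
  ring

end MainEq

/-- remaining inner integrals -/
def R2th (s : ℤ) (Ξ : ℝ → ℝ → ℂ) : ℝ → ℝ := fun θ =>
  ∫ φ in (0:ℝ)..(2 * Real.pi), ‖Cfun s Ξ θ φ‖ ^ 2 / Real.sin θ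
def Ath (Ξ : ℝ → ℝ → ℂ) : ℝ → ℝ := fun θ =>
  ∫ φ in (0:ℝ)..(2 * Real.pi), ‖pdTheta Ξ θ φ‖ ^ 2 * Real.sin θ

section Infra

lemma intervalIntegrable_of_bounded {f : ℝ → ℝ} {K : ℝ}
    (hcont : ContinuousOn f (Set.Ioo 0 Real.pi))
    (hbd : ∀ θ ∈ Set.Ioo 0 Real.pi, |f θ| ≤ K) :
    IntervalIntegrable f MeasureTheory.volume 0 Real.pi := by
  rw [intervalIntegrable_iff, Set.uIoc_of_le Real.pi_pos.le]
  rw [integrableOn_Ioc_iff_integrableOn_Ioo]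
  refine ⟨hcont.aestronglyMeasurable measurableSet_Ioo, ?_⟩
  apply MeasureTheory.HasFiniteIntegral.restrict_of_bounded (C := K) measure_Ioo_lt_top
  filter_upwards [MeasureTheory.ae_restrict_mem measurableSet_Ioo] with x hx
  rw [Real.norm_eq_abs]
  exact hbd x hx

variable {s : ℤ} {Ξ : ℝ → ℝ → ℂ} (hs : s = 2 ∨ s = -2) (hΞ : SmoothSpinWeighted s Ξ)
include hΞ

lemma contOn_inner {k : ℝ × ℝ → ℝ} (hk : ContinuousOn k Udom) :
    ContinuousOn (fun θ => ∫ φ in (0:ℝ)..(2 * Real.pi), k (θ, φ)) (Set.Ioo 0 Real.pi) := by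
  intro θ0 hθ0
  set a := θ0 / 2 with ha_def
  set b := (θ0 + Real.pi) / 2 with hb_def
  have h1 := hθ0.1; have h2 := hθ0.2
  have hrect : Set.Icc a b ×ˢ Set.Icc 0 (2 * Real.pi) ⊆ Udom := by
    rintro ⟨x, t⟩ ⟨hx, _⟩
    exact ⟨⟨by have := hx.1; simp only [ha_def] at this ⊢; linarith,
      by have := hx.2; simp only [hb_def] at this ⊢; linarith⟩, trivial⟩
  have hco := contOn_param Real.two_pi_pos.le (hk.mono hrect)
  have : ContinuousAt (fun θ => ∫ φ in (0:ℝ)..(2 * Real.pi), k (θ, φ)) θ0 := by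
    apply ContinuousOn.continuousAt hco
    apply Icc_mem_nhds <;> [simp only [ha_def]; simp only [hb_def]] <;> linarith
  exact this.continuousWithinAt

lemma RHSint_rw {θ : ℝ} (hθ : θ ∈ Set.Ioo 0 Real.pi) (φ : ℝ) :
    RHSint s Ξ θ φ = ‖pdTheta Ξ θ φ‖ ^ 2 * Real.sin θ + ‖Qfun s Ξ θ φ‖ ^ 2 * Real.sin θ := by
  have hsθ : 0 < Real.sin θ := Real.sin_pos_of_pos_of_lt_pi hθ.1 hθ.2
  simp only [RHSint, Qfun]
  rw [norm_div, Complex.norm_real, Real.norm_eq_abs, abs_of_pos hsθ, div_pow]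
  field_simp

lemma Fth_bound : ∃ K, 0 ≤ K ∧ ∀ θ ∈ Set.Ioo 0 Real.pi, |Fth s Ξ θ| ≤ K := by
  obtain ⟨KA, hKA0, hKA⟩ := KA_bound hΞ
  obtain ⟨KQ, hKQ0, hKQ⟩ := KQ_bound hΞ
  refine ⟨(KA^2 + KQ^2) * (2*Real.pi), by positivity, fun θ hθ => ?_⟩
  have hb : ∀ φ ∈ Set.uIoc (0:ℝ) (2*Real.pi), ‖RHSint s Ξ θ φ‖ ≤ KA^2 + KQ^2 := by
    intro φ _
    rw [RHSint_rw hΞ hθ φ, Real.norm_eq_abs]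
    have hsθ : 0 < Real.sin θ := Real.sin_pos_of_pos_of_lt_pi hθ.1 hθ.2
    have hs1 : Real.sin θ ≤ 1 := Real.sin_le_one θ
    have h1 := hKA θ hθ φ; have h2 := hKQ θ hθ φ
    have n1 := norm_nonneg (pdTheta Ξ θ φ); have n2 := norm_nonneg (Qfun s Ξ θ φ)
    rw [abs_of_nonneg (by positivity)]
    nlinarith
  have := intervalIntegral.norm_integral_le_of_norm_le_const hb
  rw [Real.norm_eq_abs] at this
  calc |Fth s Ξ θ| ≤ (KA^2 + KQ^2) * |2*Real.pi - 0| := this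
    _ = (KA^2 + KQ^2) * (2*Real.pi) := by
        rw [sub_zero, abs_of_pos Real.two_pi_pos]

lemma Wth_bound : ∃ K, 0 ≤ K ∧ ∀ θ ∈ Set.Ioo 0 Real.pi, |Wth Ξ θ| ≤ K := by
  obtain ⟨KX, hKX0, hKX⟩ := KXi_bound hΞ
  refine ⟨KX^2 * (2*Real.pi), by positivity, fun θ hθ => ?_⟩
  have hb : ∀ φ ∈ Set.uIoc (0:ℝ) (2*Real.pi), ‖Wfun Ξ θ φ‖ ≤ KX^2 := by
    intro φ _
    rw [Real.norm_eq_abs, Wfun]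
    have hs1 : Real.sin θ ≤ 1 := Real.sin_le_one θ
    have hs0 : 0 ≤ Real.sin θ := (Real.sin_pos_of_pos_of_lt_pi hθ.1 hθ.2).le
    have h1 := hKX θ hθ φ
    have hns : Complex.normSq (Ξ θ φ) ≤ KX^2 := by
      rw [Complex.normSq_eq_norm_sq]
      nlinarith [norm_nonneg (Ξ θ φ)]
    rw [abs_of_nonneg (mul_nonneg (Complex.normSq_nonneg _) hs0)]
    nlinarith [Complex.normSq_nonneg (Ξ θ φ)]
  have := intervalIntegral.norm_integral_le_of_norm_le_const hb
  rw [Real.norm_eq_abs] at this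
  calc |Wth Ξ θ| ≤ KX^2 * |2*Real.pi - 0| := this
    _ = KX^2 * (2*Real.pi) := by rw [sub_zero, abs_of_pos Real.two_pi_pos]

lemma Lth_bound : ∃ K, 0 ≤ K ∧ ∀ θ ∈ Set.Ioo 0 Real.pi, |Lth Ξ θ| ≤ K := by
  obtain ⟨KB, hKB0, hKB⟩ := KB_bound hΞ
  refine ⟨KB^2 * (2*Real.pi), by positivity, fun θ hθ => ?_⟩
  have hb : ∀ φ ∈ Set.uIoc (0:ℝ) (2*Real.pi), ‖‖pdPhi Ξ θ φ‖^2 * Real.sin θ‖ ≤ KB^2 := by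
    intro φ _
    rw [Real.norm_eq_abs]
    have hs1 : Real.sin θ ≤ 1 := Real.sin_le_one θ
    have hs0 : 0 ≤ Real.sin θ := (Real.sin_pos_of_pos_of_lt_pi hθ.1 hθ.2).le
    have h1 := hKB θ hθ φ
    have n1 := norm_nonneg (pdPhi Ξ θ φ)
    rw [abs_of_nonneg (by positivity)]
    nlinarith
  have := intervalIntegral.norm_integral_le_of_norm_le_const hb
  rw [Real.norm_eq_abs] at this
  calc |Lth Ξ θ| ≤ KB^2 * |2*Real.pi - 0| := this
    _ = KB^2 * (2*Real.pi) := by rw [sub_zero, abs_of_pos Real.two_pi_pos]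

lemma R2th_bound : ∃ K, 0 ≤ K ∧ ∀ θ ∈ Set.Ioo 0 Real.pi, |R2th s Ξ θ| ≤ K := by
  obtain ⟨KQ, hKQ0, hKQ⟩ := KQ_bound hΞ
  refine ⟨KQ^2 * (2*Real.pi), by positivity, fun θ hθ => ?_⟩
  have hsθ : 0 < Real.sin θ := Real.sin_pos_of_pos_of_lt_pi hθ.1 hθ.2
  have hb : ∀ φ ∈ Set.uIoc (0:ℝ) (2*Real.pi), ‖‖Cfun s Ξ θ φ‖^2 / Real.sin θ‖ ≤ KQ^2 := by
    intro φ _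
    rw [Real.norm_eq_abs]
    have hCQ : ‖Cfun s Ξ θ φ‖^2 / Real.sin θ = ‖Qfun s Ξ θ φ‖^2 * Real.sin θ := by
      simp only [Qfun]
      rw [norm_div, Complex.norm_real, Real.norm_eq_abs, abs_of_pos hsθ, div_pow]
      field_simp
    rw [hCQ]
    have hs1 : Real.sin θ ≤ 1 := Real.sin_le_one θ
    have h2 := hKQ θ hθ φ
    have n2 := norm_nonneg (Qfun s Ξ θ φ)
    rw [abs_of_nonneg (by positivity)]
    nlinarith
  have := intervalIntegral.norm_integral_le_of_norm_le_const hb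
  rw [Real.norm_eq_abs] at this
  calc |R2th s Ξ θ| ≤ KQ^2 * |2*Real.pi - 0| := this
    _ = KQ^2 * (2*Real.pi) := by rw [sub_zero, abs_of_pos Real.two_pi_pos]

lemma hIF : IntervalIntegrable (Fth s Ξ) MeasureTheory.volume 0 Real.pi := by
  obtain ⟨K, _, hK⟩ := Fth_bound hΞ
  exact intervalIntegrable_of_bounded (contOn_inner hΞ (contOn_RHSint (hsmΞ hΞ))) hK

lemma hIW' : IntervalIntegrable (Wth Ξ) MeasureTheory.volume 0 Real.pi := by
  obtain ⟨K, _, hK⟩ := Wth_bound hΞ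
  exact intervalIntegrable_of_bounded (contOn_inner hΞ (contOn_Wfun (hsmΞ hΞ))) hK

lemma hIL' : IntervalIntegrable (Lth Ξ) MeasureTheory.volume 0 Real.pi := by
  obtain ⟨K, _, hK⟩ := Lth_bound hΞ
  exact intervalIntegrable_of_bounded (contOn_inner hΞ (contOn_LHSint (hsmΞ hΞ))) hK

lemma hIR2 : IntervalIntegrable (R2th s Ξ) MeasureTheory.volume 0 Real.pi := by
  obtain ⟨K, _, hK⟩ := R2th_bound hΞ
  have hco : ContinuousOn (fun p : ℝ × ℝ => ‖Cfun s Ξ p.1 p.2‖^2 / Real.sin p.1) Udom :=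
    (((contOn_Cfun (hsmΞ hΞ)).norm).pow 2).div
      ((Real.continuous_sin.comp continuous_fst).continuousOn) (fun p hp => sinθ_ne hp.1)
  exact intervalIntegrable_of_bounded (contOn_inner hΞ hco) hK

end Infra

section Final

variable {s : ℤ} {Ξ : ℝ → ℝ → ℂ} (hs : s = 2 ∨ s = -2) (hΞ : SmoothSpinWeighted s Ξ)

lemma Fth_end0 : Fth s Ξ 0 = 0 := by
  simp [Fth, RHSint, Real.sin_zero]

lemma Fth_endpi : Fth s Ξ Real.pi = 0 := by
  simp [Fth, RHSint, Real.sin_pi]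

lemma Wth_end0 : Wth Ξ 0 = 0 := by simp [Wth, Wfun, Real.sin_zero]

lemma Wth_endpi : Wth Ξ Real.pi = 0 := by simp [Wth, Wfun, Real.sin_pi]

lemma Lth_end0 : Lth Ξ 0 = 0 := by simp [Lth, Real.sin_zero]

lemma Lth_endpi : Lth Ξ Real.pi = 0 := by simp [Lth, Real.sin_pi]

lemma R2th_end0 : R2th s Ξ 0 = 0 := by simp [R2th, Real.sin_zero]

lemma R2th_endpi : R2th s Ξ Real.pi = 0 := by simp [R2th, Real.sin_pi]

include hΞ

lemma Pth_nonneg {θ : ℝ} (hθ : θ ∈ Set.Icc 0 Real.pi) : 0 ≤ Pth s Ξ θ := by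
  apply intervalIntegral.integral_nonneg Real.two_pi_pos.le
  intro φ _
  exact mul_nonneg (pow_nonneg (norm_nonneg _) 2) (Real.sin_nonneg_of_nonneg_of_le_pi hθ.1 hθ.2)

lemma Fth_nonneg {θ : ℝ} (hθ : θ ∈ Set.Icc 0 Real.pi) : 0 ≤ Fth s Ξ θ := by
  apply intervalIntegral.integral_nonneg Real.two_pi_pos.le
  intro φ _
  have hsin : 0 ≤ Real.sin θ := Real.sin_nonneg_of_nonneg_of_le_pi hθ.1 hθ.2
  exact add_nonneg (mul_nonneg (pow_nonneg (norm_nonneg _) 2) hsin)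
    (div_nonneg (pow_nonneg (norm_nonneg _) 2) hsin)

lemma Ath_nonneg {θ : ℝ} (hθ : θ ∈ Set.Icc 0 Real.pi) : 0 ≤ Ath Ξ θ := by
  apply intervalIntegral.integral_nonneg Real.two_pi_pos.le
  intro φ _
  exact mul_nonneg (pow_nonneg (norm_nonneg _) 2) (Real.sin_nonneg_of_nonneg_of_le_pi hθ.1 hθ.2)

lemma Fth_decomp {θ : ℝ} (hθ : θ ∈ Set.Ioo 0 Real.pi) :
    Fth s Ξ θ = Ath Ξ θ + R2th s Ξ θ := by
  have hsm := hsmΞ hΞ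
  have hA : IntervalIntegrable (fun φ => ‖pdTheta Ξ θ φ‖^2 * Real.sin θ)
      MeasureTheory.volume 0 (2*Real.pi) := by
    have hco : ContinuousOn (fun p : ℝ × ℝ => ‖pdTheta Ξ p.1 p.2‖^2 * Real.sin p.1) Udom :=
      (((contOn_pdTheta hsm).norm).pow 2).mul
        ((Real.continuous_sin.comp continuous_fst).continuousOn)
    exact (cont_section hco hθ).intervalIntegrable _ _
  have hC : IntervalIntegrable (fun φ => ‖Cfun s Ξ θ φ‖^2 / Real.sin θ)
      MeasureTheory.volume 0 (2*Real.pi) := by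
    have hco : ContinuousOn (fun p : ℝ × ℝ => ‖Cfun s Ξ p.1 p.2‖^2 / Real.sin p.1) Udom :=
      (((contOn_Cfun hsm).norm).pow 2).div
        ((Real.continuous_sin.comp continuous_fst).continuousOn) (fun p hp => sinθ_ne hp.1)
    exact (cont_section hco hθ).intervalIntegrable _ _
  exact intervalIntegral.integral_add hA hC

include hs

lemma intF_ge_two_intW :
    2 * (∫ θ in (0:ℝ)..Real.pi, Wth Ξ θ) ≤ ∫ θ in (0:ℝ)..Real.pi, Fth s Ξ θ := by
  have hπ := Real.pi_pos
  obtain ⟨KF, hKF0, hKF⟩ := Fth_bound hΞ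
  obtain ⟨KW, hKW0, hKW⟩ := Wth_bound hΞ
  apply le_of_forall_pos_le_add
  intro ε hε
  obtain ⟨δM, hδM0, hδMπ, hM0, hMπ⟩ := M_small hs hΞ (ε/8) (by linarith)
  set t := min (min (δM/2) (ε/(8*(KF + 2*KW + 1)))) (Real.pi/4) with ht_def
  have ht0 : 0 < t := lt_min (lt_min (by linarith) (by positivity)) (by linarith)
  have htπ4 : t ≤ Real.pi/4 := min_le_right _ _
  have htδ : t < δM := lt_of_le_of_lt (le_trans (min_le_left _ _) (min_le_left _ _))
    (by linarith)
  have htε : t ≤ ε/(8*(KF + 2*KW + 1)) := le_trans (min_le_left _ _) (min_le_right _ _)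
  set a := t with ha_def
  set b := Real.pi - t with hb_def
  have ha0 : 0 < a := ht0
  have hab : a ≤ b := by simp only [ha_def, hb_def]; linarith
  have hbπ : b < Real.pi := by simp only [hb_def]; linarith
  have haπ : a < Real.pi := by linarith
  have hsub1 : Set.uIcc 0 a ⊆ Set.uIcc 0 Real.pi := by
    rw [Set.uIcc_of_le ha0.le, Set.uIcc_of_le hπ.le]
    exact Set.Icc_subset_Icc le_rfl haπ.le
  have hsub2 : Set.uIcc a b ⊆ Set.uIcc 0 Real.pi := by
    rw [Set.uIcc_of_le hab, Set.uIcc_of_le hπ.le]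
    exact Set.Icc_subset_Icc ha0.le hbπ.le
  have hsub3 : Set.uIcc b Real.pi ⊆ Set.uIcc 0 Real.pi := by
    rw [Set.uIcc_of_le hbπ.le, Set.uIcc_of_le hπ.le]
    exact Set.Icc_subset_Icc (by simp only [hb_def]; linarith) le_rfl
  have hsub4 : Set.uIcc 0 b ⊆ Set.uIcc 0 Real.pi := by
    rw [Set.uIcc_of_le (by linarith : (0:ℝ) ≤ b), Set.uIcc_of_le hπ.le]
    exact Set.Icc_subset_Icc le_rfl hbπ.le
  have hIF0a := (hIF hΞ).mono_set hsub1
  have hIFab := (hIF hΞ).mono_set hsub2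
  have hIFbπ := (hIF hΞ).mono_set hsub3
  have hIF0b := (hIF hΞ).mono_set hsub4
  have hIW0a := (hIW' hΞ).mono_set hsub1
  have hIWab := (hIW' hΞ).mono_set hsub2
  have hIWbπ := (hIW' hΞ).mono_set hsub3
  have hIW0b := (hIW' hΞ).mono_set hsub4
  have hsplitF : (∫ θ in (0:ℝ)..Real.pi, Fth s Ξ θ) =
      (∫ θ in (0:ℝ)..a, Fth s Ξ θ) + (∫ θ in a..b, Fth s Ξ θ) +
        (∫ θ in b..Real.pi, Fth s Ξ θ) := by
    rw [intervalIntegral.integral_add_adjacent_intervals hIF0a hIFab,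
      intervalIntegral.integral_add_adjacent_intervals hIF0b hIFbπ]
  have hsplitW : (∫ θ in (0:ℝ)..Real.pi, Wth Ξ θ) =
      (∫ θ in (0:ℝ)..a, Wth Ξ θ) + (∫ θ in a..b, Wth Ξ θ) +
        (∫ θ in b..Real.pi, Wth Ξ θ) := by
    rw [intervalIntegral.integral_add_adjacent_intervals hIW0a hIWab,
      intervalIntegral.integral_add_adjacent_intervals hIW0b hIWbπ]
  -- tail bounds
  have htail : ∀ (f : ℝ → ℝ) (K : ℝ), 0 ≤ K → (∀ θ ∈ Set.Ioo 0 Real.pi, |f θ| ≤ K) →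
      f Real.pi = 0 → |∫ θ in (0:ℝ)..a, f θ| ≤ K * t ∧
        |∫ θ in b..Real.pi, f θ| ≤ K * t := by
    intro f K hK0 hK hfπ
    constructor
    · have h := intervalIntegral.norm_integral_le_of_norm_le_const (C := K)
        (f := f) (a := (0:ℝ)) (b := a) ?_
      · rw [Real.norm_eq_abs] at h
        calc |∫ θ in (0:ℝ)..a, f θ| ≤ K * |a - 0| := h
        _ = K * t := by rw [sub_zero, abs_of_pos ha0]
      · intro x hx
        rw [Set.uIoc_of_le ha0.le] at hx
        rw [Real.norm_eq_abs]
        exact hK x ⟨hx.1, lt_of_le_of_lt hx.2 haπ⟩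
    · have h := intervalIntegral.norm_integral_le_of_norm_le_const (C := K)
        (f := f) (a := b) (b := Real.pi) ?_
      · rw [Real.norm_eq_abs] at h
        calc |∫ θ in b..Real.pi, f θ| ≤ K * |Real.pi - b| := h
        _ = K * t := by
              rw [abs_of_pos (by linarith : (0:ℝ) < Real.pi - b)]
              simp only [hb_def]; ring
      · intro x hx
        rw [Set.uIoc_of_le hbπ.le] at hx
        rw [Real.norm_eq_abs]
        rcases lt_or_eq_of_le hx.2 with hlt | heq
        · exact hK x ⟨by have := hx.1; simp only [hb_def] at this; linarith, hlt⟩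
        · rw [heq, hfπ]; simpa using hK0
  obtain ⟨hF0a, hFbπ⟩ := htail (Fth s Ξ) KF hKF0 hKF (Fth_endpi)
  obtain ⟨hW0a, hWbπ⟩ := htail (Wth Ξ) KW hKW0 hKW (Wth_endpi)
  -- main identity on [a,b]
  have hmain := main_eq hs hΞ ha0 hab hbπ
  have hPab : 0 ≤ ∫ θ in a..b, Pth s Ξ θ := by
    apply intervalIntegral.integral_nonneg hab
    intro θ hθ
    exact Pth_nonneg hΞ ⟨le_trans ha0.le hθ.1, le_trans hθ.2 hbπ.le⟩
  have hMa : |Mth s Ξ a| ≤ ε/8 := hM0 a ⟨ha0, htδ⟩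
  have hMb : |Mth s Ξ b| ≤ ε/8 := hMπ b ⟨by simp only [hb_def]; linarith, hbπ⟩
  have hσ : |((s:ℝ)/2) * (Mth s Ξ b - Mth s Ξ a)| ≤ ε/4 := by
    rw [abs_mul]
    have habs : |(s:ℝ)/2| = 1 := by rcases hs with rfl | rfl <;> norm_num
    rw [habs, one_mul]
    calc |Mth s Ξ b - Mth s Ξ a| ≤ |Mth s Ξ b| + |Mth s Ξ a| := abs_sub _ _
    _ ≤ ε/4 := by linarith
  have hεt : (2*KF + 4*KW) * t ≤ ε/2 := by
    have h1 : (2*KF + 4*KW) * t ≤ (2*KF + 4*KW) * (ε/(8*(KF + 2*KW + 1))) :=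
      mul_le_mul_of_nonneg_left htε (by linarith)
    have h2 : (2*KF + 4*KW) * (ε/(8*(KF + 2*KW + 1))) ≤ ε/2 := by
      rw [mul_div_assoc', div_le_div_iff₀ (by positivity) (by norm_num)]
      nlinarith
    linarith
  -- assemble
  have e1 : -(KF * t) ≤ ∫ θ in (0:ℝ)..a, Fth s Ξ θ := by
    have := abs_le.mp hF0a; linarith [this.1]
  have e2 : -(KF * t) ≤ ∫ θ in b..Real.pi, Fth s Ξ θ := by
    have := abs_le.mp hFbπ; linarith [this.1]
  have e3 : ∫ θ in (0:ℝ)..a, Wth Ξ θ ≤ KW * t := by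
    have := abs_le.mp hW0a; linarith [this.1, this.2]
  have e4 : ∫ θ in b..Real.pi, Wth Ξ θ ≤ KW * t := by
    have := abs_le.mp hWbπ; linarith [this.2]
  have e5 : -(ε/4) ≤ ((s:ℝ)/2) * (Mth s Ξ b - Mth s Ξ a) := by
    have := abs_le.mp hσ; linarith [this.1]
  linarith [hmain, hsplitF, hsplitW, hPab]

end Final

end

/-- For every smooth spin `±2` weighted function `Ξ` on the
sphere, the azimuthal derivative is controlled by the spinorial gradient:
`∫ |∇̊^{[±2]}Ξ|² sinθ dθ dφ ≥ (1/8) ∫ |∂_φ Ξ|² sinθ dθ dφ`, where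
`|∇̊^{[±2]}Ξ|² sinθ = |∂_θΞ|² sinθ + (1/sinθ)|∂_φΞ ± 2i cosθ Ξ|²`. -/
theorem spin_weighted_azimuthal (s : ℤ) (hs : s = 2 ∨ s = -2)
    (Ξ : ℝ → ℝ → ℂ) (hΞ : SmoothSpinWeighted s Ξ) :
    (1 / 8) * (∫ θ in (0:ℝ)..Real.pi, ∫ φ in (0:ℝ)..(2 * Real.pi),
        ‖pdPhi Ξ θ φ‖ ^ 2 * Real.sin θ) ≤
      ∫ θ in (0:ℝ)..Real.pi, ∫ φ in (0:ℝ)..(2 * Real.pi),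
        (‖pdTheta Ξ θ φ‖ ^ 2 * Real.sin θ +
          ‖pdPhi Ξ θ φ + (s : ℂ) * Complex.I * (Real.cos θ : ℂ) * Ξ θ φ‖ ^ 2 / Real.sin θ) := by
  have hπ := Real.pi_pos
  have hsm := hsmΞ hΞ
  have hmono1 : ∀ θ ∈ Set.Icc 0 Real.pi,
      (1/8) * Lth Ξ θ ≤ (1/4) * R2th s Ξ θ + Wth Ξ θ := by
    intro θ hθ
    rcases eq_or_lt_of_le hθ.1 with h0 | h0
    · rw [← h0]
      rw [Lth_end0, R2th_end0, Wth_end0]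
      norm_num
    rcases eq_or_lt_of_le hθ.2 with hπ' | hπ'
    · rw [hπ']
      rw [Lth_endpi, R2th_endpi, Wth_endpi]
      norm_num
    have hθIoo : θ ∈ Set.Ioo 0 Real.pi := ⟨h0, hπ'⟩
    have hsθ : 0 < Real.sin θ := Real.sin_pos_of_pos_of_lt_pi h0 hπ'
    have hL1 : IntervalIntegrable (fun φ => ‖pdPhi Ξ θ φ‖^2 * Real.sin θ)
        MeasureTheory.volume 0 (2*Real.pi) :=
      (cont_section (contOn_LHSint hsm) hθIoo).intervalIntegrable _ _
    have hC1 : IntervalIntegrable (fun φ => ‖Cfun s Ξ θ φ‖^2 / Real.sin θ)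
        MeasureTheory.volume 0 (2*Real.pi) := by
      have hco : ContinuousOn (fun p : ℝ × ℝ => ‖Cfun s Ξ p.1 p.2‖^2 / Real.sin p.1) Udom :=
        (((contOn_Cfun hsm).norm).pow 2).div
          ((Real.continuous_sin.comp continuous_fst).continuousOn) (fun p hp => sinθ_ne hp.1)
      exact (cont_section hco hθIoo).intervalIntegrable _ _
    have hW1 : IntervalIntegrable (fun φ => Wfun Ξ θ φ)
        MeasureTheory.volume 0 (2*Real.pi) :=
      (cont_section (contOn_Wfun hsm) hθIoo).intervalIntegrable _ _
    calc (1/8) * Lth Ξ θ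
        = ∫ φ in (0:ℝ)..(2*Real.pi), (1/8) * (‖pdPhi Ξ θ φ‖^2 * Real.sin θ) :=
          (intervalIntegral.integral_const_mul _ _).symm
      _ ≤ ∫ φ in (0:ℝ)..(2*Real.pi),
            ((1/4) * (‖Cfun s Ξ θ φ‖^2 / Real.sin θ) + Wfun Ξ θ φ) := by
          apply intervalIntegral.integral_mono_on Real.two_pi_pos.le
            (hL1.const_mul _) ((hC1.const_mul _).add hW1)
          intro φ _
          exact lhs_pointwise s hs (pdPhi Ξ θ φ) (Ξ θ φ) hsθ (Real.sin_le_one θ)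
            (Real.abs_cos_le_one θ)
      _ = (1/4) * R2th s Ξ θ + Wth Ξ θ := by
          rw [intervalIntegral.integral_add (hC1.const_mul _) hW1,
            intervalIntegral.integral_const_mul]
          rfl
  have hmono2 : ∀ θ ∈ Set.Icc 0 Real.pi, R2th s Ξ θ ≤ Fth s Ξ θ := by
    intro θ hθ
    rcases eq_or_lt_of_le hθ.1 with h0 | h0
    · rw [← h0, R2th_end0, Fth_end0]
    rcases eq_or_lt_of_le hθ.2 with hπ' | hπ'
    · rw [hπ', R2th_endpi, Fth_endpi]
    have hθIoo : θ ∈ Set.Ioo 0 Real.pi := ⟨h0, hπ'⟩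
    have hd := Fth_decomp hΞ hθIoo
    have hA := Ath_nonneg hΞ (Set.mem_Icc.mpr ⟨h0.le, hπ'.le⟩)
    linarith
  have hILc := (hIL' hΞ).const_mul (1/8 : ℝ)
  have hstep1 : (1/8) * (∫ θ in (0:ℝ)..Real.pi, Lth Ξ θ) ≤
      (1/4) * (∫ θ in (0:ℝ)..Real.pi, R2th s Ξ θ) + ∫ θ in (0:ℝ)..Real.pi, Wth Ξ θ := by
    have hmono := intervalIntegral.integral_mono_on hπ.le hILc
      (((hIR2 hΞ).const_mul (1/4)).add (hIW' hΞ)) hmono1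
    rw [intervalIntegral.integral_const_mul] at hmono
    rw [intervalIntegral.integral_add ((hIR2 hΞ).const_mul (1/4)) (hIW' hΞ),
      intervalIntegral.integral_const_mul] at hmono
    exact hmono
  have hstep2 : (∫ θ in (0:ℝ)..Real.pi, R2th s Ξ θ) ≤ ∫ θ in (0:ℝ)..Real.pi, Fth s Ξ θ :=
    intervalIntegral.integral_mono_on hπ.le (hIR2 hΞ) (hIF hΞ) hmono2
  have hstep3 := intF_ge_two_intW hs hΞ
  have hstep4 : 0 ≤ ∫ θ in (0:ℝ)..Real.pi, Fth s Ξ θ :=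
    intervalIntegral.integral_nonneg hπ.le (fun θ hθ => Fth_nonneg hΞ hθ)
  show (1/8) * (∫ θ in (0:ℝ)..Real.pi, Lth Ξ θ) ≤ ∫ θ in (0:ℝ)..Real.pi, Fth s Ξ θ
  linarith
end

section
/- Let λ^{[s]}_{mℓ}(ν) denote the eigenvalue of the spin-weighted oblate spheroidal operator with spin s = ±2 and parameter ν, and define Λ̃^{[±2]}_{mℓ}(ν) = λ^{[s]}_{mℓ}(ν) + s + ν² + 4|ν|. Then for all real ν, Λ̃^{[±2]}_{mℓ}(ν) ≥ max(2, m(m+1) − 4). -/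
/-- The spin `s`-weighted Laplacian (oblateness `ν = 0`). -/
noncomputable def spinLap (s : ℤ) (Ξ : ℝ → ℝ → ℂ) : ℝ → ℝ → ℂ := fun θ φ =>
  -((1 / Real.sin θ : ℝ) : ℂ) * pdTheta (fun t p => (Real.sin t : ℂ) * pdTheta Ξ t p) θ φ -
    ((1 / Real.sin θ ^ 2 : ℝ) : ℂ) * pdPhi (pdPhi Ξ) θ φ +
    2 * (s : ℂ) * Complex.I * ((Real.cos θ / Real.sin θ ^ 2 : ℝ) : ℂ) * pdPhi Ξ θ φ +
    4 * (((Real.cos θ / Real.sin θ) ^ 2 : ℝ) : ℂ) * Ξ θ φ - (s : ℂ) * Ξ θ φ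

/-- The spin-weighted oblate spheroidal operator with parameter `ν`:
`Δ̊^{[s]}(ν) = Δ̊^{[s]}(0) − ν² cos²θ + 2νs cosθ`. -/
noncomputable def spinLapNu (s : ℤ) (ν : ℝ) (Ξ : ℝ → ℝ → ℂ) : ℝ → ℝ → ℂ := fun θ φ =>
  spinLap s Ξ θ φ + ((-ν ^ 2 * Real.cos θ ^ 2 + 2 * ν * (s : ℝ) * Real.cos θ : ℝ) : ℂ) * Ξ θ φ



namespace SEB
open Set Filter Topology

noncomputable def wf (u : ℝ → ℂ) : ℝ → ℂ := fun t => (Real.sin t : ℂ) * deriv u t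

noncomputable def En (u : ℝ → ℂ) : ℝ → ℝ := fun t => (star (u t) * wf u t).re

noncomputable def Hf (u : ℝ → ℂ) (a b : ℝ) : ℝ → ℝ :=
  fun t => En u t - Complex.normSq (u t) * (a * Real.cos t + b)

lemma hasDerivAt_En (u : ℝ → ℂ) (V : ℝ → ℝ) (lam θ : ℝ)
    (hud : DifferentiableAt ℝ u θ) (hwd : DifferentiableAt ℝ (wf u) θ)
    (hode : deriv (wf u) θ = ((V θ - lam : ℝ) : ℂ) * u θ * (Real.sin θ : ℂ)) :
    HasDerivAt (En u) (Real.sin θ * Complex.normSq (deriv u θ)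
      + (V θ - lam) * Complex.normSq (u θ) * Real.sin θ) θ := by
  have h1 : HasDerivAt u (deriv u θ) θ := hud.hasDerivAt
  have h2 : HasDerivAt (wf u) (((V θ - lam : ℝ) : ℂ) * u θ * (Real.sin θ : ℂ)) θ := by
    rw [← hode]; exact hwd.hasDerivAt
  have h3 := (h1.star.mul h2)
  have h4 := Complex.reCLM.hasFDerivAt.comp_hasDerivAt θ h3
  simp only [Function.comp_def, Complex.reCLM_apply, Pi.mul_apply] at h4
  change HasDerivAt (En u) _ θ at h4
  convert h4 using 1
  show _ = (star (deriv u θ) * wf u θ + star (u θ) * (((V θ - lam : ℝ) : ℂ) * u θ * (Real.sin θ : ℂ))).re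
  simp only [wf, Complex.add_re, Complex.mul_re, Complex.mul_im, Complex.normSq_apply,
    Complex.ofReal_re, Complex.ofReal_im, Complex.star_def, Complex.conj_re, Complex.conj_im]
  ring

lemma hasDerivAt_nsq (u : ℝ → ℂ) (θ : ℝ) (hud : DifferentiableAt ℝ u θ) :
    HasDerivAt (fun t => Complex.normSq (u t))
      (2 * (star (u θ) * deriv u θ).re) θ := by
  have h1 : HasDerivAt u (deriv u θ) θ := hud.hasDerivAt
  have h3 := (h1.star.mul h1)
  have h4 := Complex.reCLM.hasFDerivAt.comp_hasDerivAt θ h3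
  simp only [Function.comp_def, Complex.reCLM_apply, Pi.mul_apply] at h4
  have hfn : (fun t => (star (u t) * u t).re) = fun t => Complex.normSq (u t) := by
    funext t
    simp [Complex.mul_re, Complex.normSq_apply, Complex.star_def]
  rw [hfn] at h4
  refine h4.congr_deriv ?_
  simp only [Complex.add_re, Complex.mul_re, Complex.star_def, Complex.conj_re, Complex.conj_im]
  ring

end SEB

namespace SEB2
open Set Filter Topology SEB

lemma hasDerivAt_Hf (u : ℝ → ℂ) (V : ℝ → ℝ) (lam a b θ : ℝ)
    (hud : DifferentiableAt ℝ u θ) (hwd : DifferentiableAt ℝ (wf u) θ)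
    (hode : deriv (wf u) θ = ((V θ - lam : ℝ) : ℂ) * u θ * (Real.sin θ : ℂ)) :
    HasDerivAt (Hf u a b)
      (Real.sin θ * Complex.normSq (deriv u θ)
        + (V θ - lam) * Complex.normSq (u θ) * Real.sin θ
        - (2 * (star (u θ) * deriv u θ).re * (a * Real.cos θ + b)
            + Complex.normSq (u θ) * (a * -Real.sin θ))) θ := by
  have hEn := hasDerivAt_En u V lam θ hud hwd hode
  have hh : HasDerivAt (fun t => a * Real.cos t + b) (a * -Real.sin θ) θ :=
    ((Real.hasDerivAt_cos θ).const_mul a).add_const b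
  have hnsq := hasDerivAt_nsq u θ hud
  exact hEn.sub (hnsq.mul hh)

lemma deriv_bound (u : ℝ → ℂ) (V : ℝ → ℝ) (lam a b ε θ : ℝ)
    (hθ : θ ∈ Ioo 0 Real.pi)
    (hpot : ε * Real.sin θ ^ 2 ≤ (V θ - lam + a) * Real.sin θ ^ 2 - (a * Real.cos θ + b) ^ 2) :
    ε * Real.sin θ * Complex.normSq (u θ)
      ≤ Real.sin θ * Complex.normSq (deriv u θ)
        + (V θ - lam) * Complex.normSq (u θ) * Real.sin θ
        - (2 * (star (u θ) * deriv u θ).re * (a * Real.cos θ + b)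
            + Complex.normSq (u θ) * (a * -Real.sin θ)) := by
  have hS : 0 < Real.sin θ := Real.sin_pos_of_pos_of_lt_pi hθ.1 hθ.2
  set S := Real.sin θ
  set h := a * Real.cos θ + b
  have key : 0 ≤ S ^ 2 * Complex.normSq (deriv u θ) + h ^ 2 * Complex.normSq (u θ)
      - 2 * S * h * (star (u θ) * deriv u θ).re := by
    have hexp : Complex.normSq ((S : ℂ) * deriv u θ - (h : ℂ) * u θ)
        = S ^ 2 * Complex.normSq (deriv u θ) + h ^ 2 * Complex.normSq (u θ)
          - 2 * S * h * (star (u θ) * deriv u θ).re := by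
      simp only [Complex.normSq_apply, Complex.sub_re, Complex.sub_im, Complex.mul_re,
        Complex.mul_im, Complex.ofReal_re, Complex.ofReal_im, Complex.star_def,
        Complex.conj_re, Complex.conj_im]
      ring
    rw [← hexp]
    exact Complex.normSq_nonneg _
  have hnu : 0 ≤ Complex.normSq (u θ) := Complex.normSq_nonneg _
  have hpm := mul_le_mul_of_nonneg_right hpot hnu
  nlinarith [key, hpm, hS, Complex.normSq_nonneg (deriv u θ)]

lemma core (u : ℝ → ℂ) (V : ℝ → ℝ) (lam a b ε : ℝ) (hε : 0 < ε)
    (hud : ∀ θ ∈ Ioo 0 Real.pi, DifferentiableAt ℝ u θ)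
    (hwd : ∀ θ ∈ Ioo 0 Real.pi, DifferentiableAt ℝ (wf u) θ)
    (hode : ∀ θ ∈ Ioo 0 Real.pi,
      deriv (wf u) θ = ((V θ - lam : ℝ) : ℂ) * u θ * (Real.sin θ : ℂ))
    (hpot : ∀ θ ∈ Ioo 0 Real.pi,
      ε * Real.sin θ ^ 2 ≤ (V θ - lam + a) * Real.sin θ ^ 2 - (a * Real.cos θ + b) ^ 2)
    (u0 upi : ℂ)
    (hu0 : Tendsto u (𝓝[Ioo 0 Real.pi] 0) (𝓝 u0))
    (hw0 : Tendsto (wf u) (𝓝[Ioo 0 Real.pi] 0) (𝓝 0))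
    (hupi : Tendsto u (𝓝[Ioo 0 Real.pi] Real.pi) (𝓝 upi))
    (hwpi : Tendsto (wf u) (𝓝[Ioo 0 Real.pi] Real.pi) (𝓝 0))
    (hb0 : Complex.normSq u0 * (a + b) ≤ 0)
    (hbpi : 0 ≤ Complex.normSq upi * (b - a))
    (θ₀ : ℝ) (hθ₀ : θ₀ ∈ Ioo 0 Real.pi) (hne : u θ₀ ≠ 0) : False := by
  have hπ := Real.pi_pos
  set H := Hf u a b with hHdef
  set D : ℝ → ℝ := fun θ =>
    Real.sin θ * Complex.normSq (deriv u θ)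
      + (V θ - lam) * Complex.normSq (u θ) * Real.sin θ
      - (2 * (star (u θ) * deriv u θ).re * (a * Real.cos θ + b)
          + Complex.normSq (u θ) * (a * -Real.sin θ)) with hDdef
  have hD : ∀ θ ∈ Ioo 0 Real.pi, HasDerivAt H (D θ) θ := fun θ hθ =>
    hasDerivAt_Hf u V lam a b θ (hud θ hθ) (hwd θ hθ) (hode θ hθ)
  have hDlb : ∀ θ ∈ Ioo 0 Real.pi, ε * Real.sin θ * Complex.normSq (u θ) ≤ D θ :=
    fun θ hθ => deriv_bound u V lam a b ε θ hθ (hpot θ hθ)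
  have hDnn : ∀ θ ∈ Ioo 0 Real.pi, 0 ≤ D θ := by
    intro θ hθ
    refine le_trans ?_ (hDlb θ hθ)
    have hsp := Real.sin_pos_of_pos_of_lt_pi hθ.1 hθ.2
    exact mul_nonneg (mul_nonneg hε.le hsp.le) (Complex.normSq_nonneg _)
  -- monotonicity helper
  have mono : ∀ c : ℝ, 0 ≤ c → ∀ x y : ℝ, 0 < x → x ≤ y → y < Real.pi →
      (∀ t ∈ Icc x y, c ≤ D t) → H x + c * (y - x) ≤ H y := by
    intro c hc x y hx hxy hy hcD
    have hsub : Icc x y ⊆ Ioo 0 Real.pi := fun t ht => ⟨lt_of_lt_of_le hx ht.1, lt_of_le_of_lt ht.2 hy⟩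
    have hlin : ∀ t : ℝ, HasDerivAt (fun z : ℝ => c * z) c t := by
      intro t
      simpa using (hasDerivAt_id t).const_mul c
    have hmono : MonotoneOn (fun t => H t - c * t) (Icc x y) := by
      apply monotoneOn_of_deriv_nonneg (convex_Icc x y)
      · intro t ht
        exact (((hD t (hsub ht)).sub (hlin t)).continuousAt).continuousWithinAt
      · intro t ht
        rw [interior_Icc] at ht
        exact (((hD t (hsub (Ioo_subset_Icc_self ht))).sub
          (hlin t)).differentiableAt).differentiableWithinAt
      · intro t ht
        rw [interior_Icc] at ht
        have ht' := Ioo_subset_Icc_self ht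
        rw [show (fun t => H t - c * t) = H - fun z => c * z from rfl, (((hD t (hsub ht')).sub (hlin t))).deriv]
        have := hcD t ht'
        linarith
    have := hmono (left_mem_Icc.mpr hxy) (right_mem_Icc.mpr hxy) hxy
    simp only at this
    linarith
  -- find interval [θ₀, q] where normSq (u ·) is bounded below
  set ε₀ : ℝ := Complex.normSq (u θ₀) / 2 with hε₀def
  have hε₀ : 0 < ε₀ := by
    have := Complex.normSq_pos.mpr hne
    positivity
  have hcont : ContinuousAt (fun t => Complex.normSq (u t)) θ₀ :=
    Complex.continuous_normSq.continuousAt.comp (hud θ₀ hθ₀).continuousAt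
  have hev : {t : ℝ | ε₀ < Complex.normSq (u t)} ∈ 𝓝 θ₀ := by
    apply hcont.preimage_mem_nhds
    apply Ioi_mem_nhds
    rw [hε₀def]
    have := Complex.normSq_pos.mpr hne
    linarith
  obtain ⟨r, hr, hball⟩ := Metric.mem_nhds_iff.mp hev
  set q : ℝ := min (θ₀ + r / 2) ((θ₀ + Real.pi) / 2) with hqdef
  have hθ₀q : θ₀ < q := by
    apply lt_min
    · linarith
    · linarith [hθ₀.2]
  have hqπ : q < Real.pi := by
    apply lt_of_le_of_lt (min_le_right _ _)
    linarith [hθ₀.2]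
  have hIcc : ∀ t ∈ Icc θ₀ q, ε₀ < Complex.normSq (u t) := by
    intro t ht
    apply hball
    rw [Metric.mem_ball, Real.dist_eq, abs_lt]
    constructor
    · linarith [ht.1]
    · have h1 : t ≤ θ₀ + r / 2 := le_trans ht.2 (min_le_left _ _)
      linarith
  have hsubq : Icc θ₀ q ⊆ Ioo 0 Real.pi := fun t ht =>
    ⟨lt_of_lt_of_le hθ₀.1 ht.1, lt_of_le_of_lt ht.2 hqπ⟩
  obtain ⟨tm, htm, hmin⟩ := isCompact_Icc.exists_isMinOn (f := Real.sin)
    ⟨θ₀, left_mem_Icc.mpr hθ₀q.le⟩ Real.continuous_sin.continuousOn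
  set ε₁ : ℝ := Real.sin tm with hε₁def
  have hε₁ : 0 < ε₁ := by
    have h := hsubq htm
    exact Real.sin_pos_of_pos_of_lt_pi h.1 h.2
  set c : ℝ := ε * (ε₁ * ε₀) with hcdef
  have hc : 0 < c := by positivity
  have hcD : ∀ t ∈ Icc θ₀ q, c ≤ D t := by
    intro t ht
    refine le_trans ?_ (hDlb t (hsubq ht))
    have h1 : ε₁ ≤ Real.sin t := hmin ht
    have h2 : ε₀ ≤ Complex.normSq (u t) := (hIcc t ht).le
    have h3 : 0 < Real.sin t := Real.sin_pos_of_pos_of_lt_pi (hsubq ht).1 (hsubq ht).2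
    rw [hcdef]
    have : ε₁ * ε₀ ≤ Real.sin t * Complex.normSq (u t) := by
      apply mul_le_mul h1 h2 hε₀.le h3.le
    nlinarith
  -- limits of H at the poles
  have hHcomp : ∀ z : ℂ, ∀ x : ℝ, Tendsto u (𝓝[Ioo 0 Real.pi] x) (𝓝 z) →
      Tendsto (wf u) (𝓝[Ioo 0 Real.pi] x) (𝓝 0) →
      Tendsto H (𝓝[Ioo 0 Real.pi] x) (𝓝 (-(Complex.normSq z * (a * Real.cos x + b)))) := by
    intro z x huz hwz
    have h1 : Tendsto (fun t => (star (u t) * wf u t).re) (𝓝[Ioo 0 Real.pi] x) (𝓝 0) := by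
      have : Tendsto (fun t => star (u t) * wf u t) (𝓝[Ioo 0 Real.pi] x) (𝓝 (star z * 0)) :=
        ((continuous_star.tendsto z).comp huz).mul hwz
      rw [mul_zero] at this
      exact (Complex.continuous_re.tendsto 0).comp this
    have h2 : Tendsto (fun t => Complex.normSq (u t) * (a * Real.cos t + b))
        (𝓝[Ioo 0 Real.pi] x) (𝓝 (Complex.normSq z * (a * Real.cos x + b))) := by
      refine Tendsto.mul ((Complex.continuous_normSq.tendsto z).comp huz) ?_
      exact ((continuous_const.mul Real.continuous_cos).add continuous_const).continuousAt.continuousWithinAt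
    have := h1.sub h2
    rw [zero_sub] at this
    exact this
  have hL0 := hHcomp u0 0 hu0 hw0
  have hLπ := hHcomp upi Real.pi hupi hwpi
  rw [Real.cos_zero] at hL0
  rw [Real.cos_pi] at hLπ
  have hL0' : 0 ≤ -(Complex.normSq u0 * (a * 1 + b)) := by rw [mul_one]; linarith
  have hLπ' : -(Complex.normSq upi * (a * -1 + b)) ≤ 0 := by
    have : a * -1 + b = b - a := by ring
    rw [this]; linarith
  -- NeBot instances
  have hnb0 : (𝓝[Ioo (0:ℝ) Real.pi] (0:ℝ)).NeBot := by
    rw [← mem_closure_iff_nhdsWithin_neBot, closure_Ioo hπ.ne]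
    exact ⟨le_refl 0, hπ.le⟩
  have hnbπ : (𝓝[Ioo (0:ℝ) Real.pi] Real.pi).NeBot := by
    rw [← mem_closure_iff_nhdsWithin_neBot, closure_Ioo hπ.ne]
    exact ⟨hπ.le, le_refl Real.pi⟩
  set c' : ℝ := c * (q - θ₀) with hc'def
  have hc' : 0 < c' := by
    have := hθ₀q
    rw [hc'def]
    nlinarith
  -- pick x near 0
  have hev0 : ∀ᶠ x in 𝓝[Ioo (0:ℝ) Real.pi] 0,
      (-(Complex.normSq u0 * (a * 1 + b)) - c' / 4 < H x ∧ x < θ₀) ∧ x ∈ Ioo (0:ℝ) Real.pi := by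
    refine ((hL0.eventually (eventually_gt_nhds (by linarith))).and ?_).and
      eventually_mem_nhdsWithin
    exact eventually_nhdsWithin_of_eventually_nhds
      (eventually_of_mem (Iio_mem_nhds hθ₀.1) (fun x hx => hx))
  obtain ⟨x, ⟨hx1, hx2⟩, hx3⟩ := hev0.exists
  -- pick y near π
  have hevπ : ∀ᶠ y in 𝓝[Ioo (0:ℝ) Real.pi] Real.pi,
      (H y < -(Complex.normSq upi * (a * -1 + b)) + c' / 4 ∧ q < y) ∧ y ∈ Ioo (0:ℝ) Real.pi := by
    refine ((hLπ.eventually (eventually_lt_nhds (by linarith))).and ?_).and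
      eventually_mem_nhdsWithin
    exact eventually_nhdsWithin_of_eventually_nhds
      (eventually_of_mem (Ioi_mem_nhds hqπ) (fun y hy => hy))
  obtain ⟨y, ⟨hy1, hy2⟩, hy3⟩ := hevπ.exists
  -- chain of inequalities
  have step1 : H x + 0 * (θ₀ - x) ≤ H θ₀ :=
    mono 0 le_rfl x θ₀ hx3.1 hx2.le hθ₀.2
      (fun t ht => hDnn t ⟨lt_of_lt_of_le hx3.1 ht.1, lt_of_le_of_lt ht.2 hθ₀.2⟩)
  have step2 : H θ₀ + c * (q - θ₀) ≤ H q := mono c hc.le θ₀ q hθ₀.1 hθ₀q.le hqπ hcD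
  have step3 : H q + 0 * (y - q) ≤ H y :=
    mono 0 le_rfl q y (lt_trans hθ₀.1 hθ₀q) hy2.le hy3.2
      (fun t ht => hDnn t ⟨lt_of_lt_of_le (lt_trans hθ₀.1 hθ₀q) ht.1, lt_of_le_of_lt ht.2 hy3.2⟩)
  rw [zero_mul] at step1 step3
  rw [← hc'def] at step2
  linarith

lemma En_tendsto (u : ℝ → ℂ) (x : ℝ) (z : ℂ)
    (huz : Tendsto u (𝓝[Ioo 0 Real.pi] x) (𝓝 z))
    (hwz : Tendsto (wf u) (𝓝[Ioo 0 Real.pi] x) (𝓝 0)) :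
    Tendsto (En u) (𝓝[Ioo 0 Real.pi] x) (𝓝 0) := by
  have : Tendsto (fun t => star (u t) * wf u t) (𝓝[Ioo 0 Real.pi] x) (𝓝 (star z * 0)) :=
    ((continuous_star.tendsto z).comp huz).mul hwz
  rw [mul_zero] at this
  exact (Complex.continuous_re.tendsto 0).comp this

lemma pole0 (u : ℝ → ℂ) (V : ℝ → ℝ) (lam M : ℝ) (u0 : ℂ)
    (hud : ∀ θ ∈ Ioo 0 Real.pi, DifferentiableAt ℝ u θ)
    (hwd : ∀ θ ∈ Ioo 0 Real.pi, DifferentiableAt ℝ (wf u) θ)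
    (hode : ∀ θ ∈ Ioo 0 Real.pi,
      deriv (wf u) θ = ((V θ - lam : ℝ) : ℂ) * u θ * (Real.sin θ : ℂ))
    (hW : ∀ θ ∈ Ioo 0 (Real.pi / 2), 4 / θ - M ≤ (V θ - lam) * Real.sin θ)
    (hu0 : Tendsto u (𝓝[Ioo 0 Real.pi] 0) (𝓝 u0))
    (hw0 : Tendsto (wf u) (𝓝[Ioo 0 Real.pi] 0) (𝓝 0)) : u0 = 0 := by
  by_contra h0
  have hπ := Real.pi_pos
  set ε₀ : ℝ := Complex.normSq u0 / 2 with hε₀def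
  have hε₀ : 0 < ε₀ := by
    have := Complex.normSq_pos.mpr h0
    positivity
  have hEn := En_tendsto u 0 u0 hu0 hw0
  have hevent : ∀ᶠ t in 𝓝[Ioo (0:ℝ) Real.pi] 0,
      ε₀ < Complex.normSq (u t) ∧ -1 < En u t := by
    have e1 : ∀ᶠ t in 𝓝[Ioo (0:ℝ) Real.pi] 0, ε₀ < Complex.normSq (u t) := by
      have hl : Tendsto (fun t => Complex.normSq (u t)) (𝓝[Ioo 0 Real.pi] 0)
          (𝓝 (Complex.normSq u0)) := (Complex.continuous_normSq.tendsto u0).comp hu0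
      exact hl.eventually (eventually_gt_nhds (by rw [hε₀def]; linarith [Complex.normSq_pos.mpr h0]))
    have e2 : ∀ᶠ t in 𝓝[Ioo (0:ℝ) Real.pi] 0, (-1:ℝ) < En u t :=
      hEn.eventually (eventually_gt_nhds (by norm_num))
    exact e1.and e2
  obtain ⟨δ₁, hδ₁, hδ₁p'⟩ := Metric.mem_nhdsWithin_iff.mp hevent
  have hδ₁p : ∀ t ∈ Ioo (0:ℝ) Real.pi, dist t 0 < δ₁ →
      ε₀ < Complex.normSq (u t) ∧ -1 < En u t := by
    intro t ht hd
    exact hδ₁p' ⟨Metric.mem_ball.mpr hd, ht⟩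
  set δ : ℝ := min (min (δ₁ / 2) (Real.pi / 4)) (1 / (max M 1)) with hδdef
  have hδpos : 0 < δ := by
    apply lt_min (lt_min (by linarith) (by linarith))
    have : (0:ℝ) < max M 1 := lt_of_lt_of_le one_pos (le_max_right _ _)
    positivity
  have hδπ4 : δ ≤ Real.pi / 4 := le_trans (min_le_left _ _) (min_le_right _ _)
  have hδδ₁ : δ ≤ δ₁ / 2 := le_trans (min_le_left _ _) (min_le_left _ _)
  have hδM : δ ≤ 1 / max M 1 := min_le_right _ _
  have hmem : ∀ t : ℝ, 0 < t → t ≤ δ → t ∈ Ioo (0:ℝ) Real.pi ∧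
      ε₀ < Complex.normSq (u t) ∧ -1 < En u t := by
    intro t ht htδ
    have h1 : t < Real.pi := by linarith [hδπ4]
    have h2 : t ∈ Ioo (0:ℝ) Real.pi := ⟨ht, h1⟩
    refine ⟨h2, hδ₁p t h2 ?_⟩
    rw [Real.dist_eq, sub_zero, abs_of_pos ht]
    linarith
  -- G is monotone on (0, δ]
  have hG : ∀ t : ℝ, 0 < t → t ≤ δ →
      HasDerivAt (fun z => En u z - 2 * ε₀ * Real.log z) (Real.sin t * Complex.normSq (deriv u t)
        + (V t - lam) * Complex.normSq (u t) * Real.sin t - 2 * ε₀ * t⁻¹) t := by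
    intro t ht htδ
    have h2 := (hmem t ht htδ).1
    exact (hasDerivAt_En u V lam t (hud t h2) (hwd t h2) (hode t h2)).sub
      ((Real.hasDerivAt_log ht.ne').const_mul (2 * ε₀))
  have hGnn : ∀ t : ℝ, 0 < t → t ≤ δ →
      0 ≤ Real.sin t * Complex.normSq (deriv u t)
        + (V t - lam) * Complex.normSq (u t) * Real.sin t - 2 * ε₀ * t⁻¹ := by
    intro t ht htδ
    obtain ⟨h2, h3, _⟩ := hmem t ht htδ
    have hsin : 0 < Real.sin t := Real.sin_pos_of_pos_of_lt_pi h2.1 h2.2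
    have hWt : 4 / t - M ≤ (V t - lam) * Real.sin t := by
      apply hW t ⟨ht, by linarith⟩
    have hMt : M * t ≤ 1 := by
      have h4 : M ≤ max M 1 := le_max_left M 1
      have h5 : 0 < max M 1 := lt_of_lt_of_le one_pos (le_max_right _ _)
      have h6 : t ≤ 1 / max M 1 := le_trans htδ hδM
      have h7 : t * max M 1 ≤ 1 := by
        rw [← le_div_iff₀ h5]; exact h6
      nlinarith
    -- so (V t - lam) * sin t ≥ 4/t - M ≥ 3/t
    have h7 : 3 / t ≤ (V t - lam) * Real.sin t := by
      have : M ≤ 1 / t := by rw [le_div_iff₀ ht]; linarith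
      have h8 : 4 / t - 1 / t = 3 / t := by field_simp; norm_num
      linarith
    have h9 : (3 / t) * ε₀ ≤ (V t - lam) * Real.sin t * Complex.normSq (u t) := by
      have h10 : 0 < 3 / t := by positivity
      exact mul_le_mul h7 h3.le hε₀.le (le_trans h10.le h7)
    have h11 : 0 ≤ Real.sin t * Complex.normSq (deriv u t) :=
      mul_nonneg hsin.le (Complex.normSq_nonneg _)
    have h12 : 2 * ε₀ * t⁻¹ ≤ (3 / t) * ε₀ := by
      rw [inv_eq_one_div, div_mul_eq_mul_div, mul_one_div, div_le_div_iff₀ ht ht]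
      nlinarith
    nlinarith
  have hmono : ∀ x : ℝ, 0 < x → x ≤ δ / 2 →
      En u x - 2 * ε₀ * Real.log x ≤ En u (δ / 2) - 2 * ε₀ * Real.log (δ / 2) := by
    intro x hx hxδ
    have hmm : MonotoneOn (fun z => En u z - 2 * ε₀ * Real.log z) (Icc x (δ / 2)) := by
      apply monotoneOn_of_deriv_nonneg (convex_Icc _ _)
      · intro t ht
        have h1 : 0 < t := lt_of_lt_of_le hx ht.1
        have h2 : t ≤ δ := le_trans ht.2 (by linarith)
        exact (hG t h1 h2).continuousAt.continuousWithinAt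
      · intro t ht
        rw [interior_Icc] at ht
        have h1 : 0 < t := lt_trans hx ht.1
        have h2 : t ≤ δ := le_trans ht.2.le (by linarith)
        exact (hG t h1 h2).differentiableAt.differentiableWithinAt
      · intro t ht
        rw [interior_Icc] at ht
        have h1 : 0 < t := lt_trans hx ht.1
        have h2 : t ≤ δ := le_trans ht.2.le (by linarith)
        rw [(hG t h1 h2).deriv]
        exact hGnn t h1 h2
    exact hmm (left_mem_Icc.mpr hxδ) (right_mem_Icc.mpr hxδ) hxδ
  -- contradiction by taking x → 0
  set C : ℝ := En u (δ / 2) - 2 * ε₀ * Real.log (δ / 2) with hCdef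
  set x : ℝ := min (δ / 4) (Real.exp (-(C + 2) / (2 * ε₀))) with hxdef
  have hxpos : 0 < x := lt_min (by linarith) (Real.exp_pos _)
  have hxδ : x ≤ δ / 2 := le_trans (min_le_left _ _) (by linarith)
  have hlogx : Real.log x ≤ -(C + 2) / (2 * ε₀) := by
    calc Real.log x ≤ Real.log (Real.exp (-(C + 2) / (2 * ε₀))) :=
          Real.log_le_log hxpos (min_le_right _ _)
      _ = -(C + 2) / (2 * ε₀) := Real.log_exp _
  have hEnx : -1 < En u x := (hmem x hxpos (le_trans hxδ (by linarith))).2.2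
  have hm := hmono x hxpos hxδ
  have h1 : 2 * ε₀ * Real.log x ≤ -(C + 2) := by
    have h2 := mul_le_mul_of_nonneg_left hlogx (by positivity : (0:ℝ) ≤ 2 * ε₀)
    calc 2 * ε₀ * Real.log x ≤ 2 * ε₀ * (-(C + 2) / (2 * ε₀)) := h2
      _ = -(C + 2) := by field_simp
  linarith

lemma polePi (u : ℝ → ℂ) (V : ℝ → ℝ) (lam M : ℝ) (upi : ℂ)
    (hud : ∀ θ ∈ Ioo 0 Real.pi, DifferentiableAt ℝ u θ)
    (hwd : ∀ θ ∈ Ioo 0 Real.pi, DifferentiableAt ℝ (wf u) θ)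
    (hode : ∀ θ ∈ Ioo 0 Real.pi,
      deriv (wf u) θ = ((V θ - lam : ℝ) : ℂ) * u θ * (Real.sin θ : ℂ))
    (hW : ∀ θ ∈ Ioo (Real.pi / 2) Real.pi,
      4 / (Real.pi - θ) - M ≤ (V θ - lam) * Real.sin θ)
    (hupi : Tendsto u (𝓝[Ioo 0 Real.pi] Real.pi) (𝓝 upi))
    (hwpi : Tendsto (wf u) (𝓝[Ioo 0 Real.pi] Real.pi) (𝓝 0)) : upi = 0 := by
  by_contra h0
  have hπ := Real.pi_pos
  set ε₀ : ℝ := Complex.normSq upi / 2 with hε₀def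
  have hε₀ : 0 < ε₀ := by
    have := Complex.normSq_pos.mpr h0
    positivity
  have hEn := En_tendsto u Real.pi upi hupi hwpi
  have hevent : ∀ᶠ t in 𝓝[Ioo (0:ℝ) Real.pi] Real.pi,
      ε₀ < Complex.normSq (u t) ∧ En u t < 1 := by
    have e1 : ∀ᶠ t in 𝓝[Ioo (0:ℝ) Real.pi] Real.pi, ε₀ < Complex.normSq (u t) := by
      have hl : Tendsto (fun t => Complex.normSq (u t)) (𝓝[Ioo 0 Real.pi] Real.pi)
          (𝓝 (Complex.normSq upi)) := (Complex.continuous_normSq.tendsto upi).comp hupi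
      exact hl.eventually (eventually_gt_nhds (by rw [hε₀def]; linarith [Complex.normSq_pos.mpr h0]))
    have e2 : ∀ᶠ t in 𝓝[Ioo (0:ℝ) Real.pi] Real.pi, En u t < (1:ℝ) :=
      hEn.eventually (eventually_lt_nhds (by norm_num))
    exact e1.and e2
  obtain ⟨δ₁, hδ₁, hδ₁p'⟩ := Metric.mem_nhdsWithin_iff.mp hevent
  have hδ₁p : ∀ t ∈ Ioo (0:ℝ) Real.pi, dist t Real.pi < δ₁ →
      ε₀ < Complex.normSq (u t) ∧ En u t < 1 := by
    intro t ht hd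
    exact hδ₁p' ⟨Metric.mem_ball.mpr hd, ht⟩
  set δ : ℝ := min (min (δ₁ / 2) (Real.pi / 4)) (1 / (max M 1)) with hδdef
  have hδpos : 0 < δ := by
    apply lt_min (lt_min (by linarith) (by linarith))
    have : (0:ℝ) < max M 1 := lt_of_lt_of_le one_pos (le_max_right _ _)
    positivity
  have hδπ4 : δ ≤ Real.pi / 4 := le_trans (min_le_left _ _) (min_le_right _ _)
  have hδδ₁ : δ ≤ δ₁ / 2 := le_trans (min_le_left _ _) (min_le_left _ _)
  have hδM : δ ≤ 1 / max M 1 := min_le_right _ _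
  have hmem : ∀ t : ℝ, Real.pi - δ ≤ t → t < Real.pi → t ∈ Ioo (0:ℝ) Real.pi ∧
      ε₀ < Complex.normSq (u t) ∧ En u t < 1 := by
    intro t ht htπ
    have h1 : 0 < t := by linarith [hδπ4]
    have h2 : t ∈ Ioo (0:ℝ) Real.pi := ⟨h1, htπ⟩
    refine ⟨h2, hδ₁p t h2 ?_⟩
    rw [Real.dist_eq, abs_of_neg (by linarith : t - Real.pi < 0)]
    linarith
  have hG : ∀ t : ℝ, Real.pi - δ ≤ t → t < Real.pi →
      HasDerivAt (fun z => En u z + 2 * ε₀ * Real.log (Real.pi - z))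
        (Real.sin t * Complex.normSq (deriv u t)
          + (V t - lam) * Complex.normSq (u t) * Real.sin t
          + 2 * ε₀ * ((Real.pi - t)⁻¹ * -1)) t := by
    intro t ht htπ
    have h2 := (hmem t ht htπ).1
    have hlog : HasDerivAt (fun z => Real.log (Real.pi - z)) ((Real.pi - t)⁻¹ * -1) t := by
      have hin : HasDerivAt (fun z : ℝ => Real.pi - z) (-1) t := by
        simpa using (hasDerivAt_id t).const_sub Real.pi
      exact (Real.hasDerivAt_log (by linarith : Real.pi - t ≠ 0)).comp t hin
    exact (hasDerivAt_En u V lam t (hud t h2) (hwd t h2) (hode t h2)).add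
      (hlog.const_mul (2 * ε₀))
  have hGnn : ∀ t : ℝ, Real.pi - δ ≤ t → t < Real.pi →
      0 ≤ Real.sin t * Complex.normSq (deriv u t)
        + (V t - lam) * Complex.normSq (u t) * Real.sin t
        + 2 * ε₀ * ((Real.pi - t)⁻¹ * -1) := by
    intro t ht htπ
    obtain ⟨h2, h3, _⟩ := hmem t ht htπ
    set r : ℝ := Real.pi - t with hrdef
    have hr : 0 < r := by rw [hrdef]; linarith
    have hrδ : r ≤ δ := by rw [hrdef]; linarith
    have hsin : 0 < Real.sin t := Real.sin_pos_of_pos_of_lt_pi h2.1 h2.2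
    have hWt : 4 / r - M ≤ (V t - lam) * Real.sin t := by
      apply hW t
      constructor
      · have : δ ≤ Real.pi / 4 := hδπ4
        rw [hrdef] at hrδ
        linarith
      · exact htπ
    have hMt : M * r ≤ 1 := by
      have h4 : M ≤ max M 1 := le_max_left M 1
      have h5 : 0 < max M 1 := lt_of_lt_of_le one_pos (le_max_right _ _)
      have h6 : r ≤ 1 / max M 1 := le_trans hrδ hδM
      have h7 : r * max M 1 ≤ 1 := by
        rw [← le_div_iff₀ h5]; exact h6
      nlinarith
    have h7 : 3 / r ≤ (V t - lam) * Real.sin t := by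
      have : M ≤ 1 / r := by rw [le_div_iff₀ hr]; linarith
      have h8 : 4 / r - 1 / r = 3 / r := by field_simp; norm_num
      linarith
    have h9 : (3 / r) * ε₀ ≤ (V t - lam) * Real.sin t * Complex.normSq (u t) := by
      have h10 : 0 < 3 / r := by positivity
      exact mul_le_mul h7 h3.le hε₀.le (le_trans h10.le h7)
    have h11 : 0 ≤ Real.sin t * Complex.normSq (deriv u t) :=
      mul_nonneg hsin.le (Complex.normSq_nonneg _)
    have h12 : 2 * ε₀ * r⁻¹ ≤ (3 / r) * ε₀ := by
      rw [inv_eq_one_div, div_mul_eq_mul_div, mul_one_div, div_le_div_iff₀ hr hr]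
      nlinarith
    have : 2 * ε₀ * ((Real.pi - t)⁻¹ * -1) = -(2 * ε₀ * r⁻¹) := by rw [← hrdef]; ring
    rw [this]
    linarith
  have hmono : ∀ y : ℝ, Real.pi - δ / 2 ≤ y → y < Real.pi →
      En u (Real.pi - δ / 2) + 2 * ε₀ * Real.log (Real.pi - (Real.pi - δ / 2))
        ≤ En u y + 2 * ε₀ * Real.log (Real.pi - y) := by
    intro y hy hyπ
    have hmm : MonotoneOn (fun z => En u z + 2 * ε₀ * Real.log (Real.pi - z))
        (Icc (Real.pi - δ / 2) y) := by
      apply monotoneOn_of_deriv_nonneg (convex_Icc _ _)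
      · intro t ht
        have h1 : Real.pi - δ ≤ t := by linarith [ht.1]
        have h2 : t < Real.pi := lt_of_le_of_lt ht.2 hyπ
        exact (hG t h1 h2).continuousAt.continuousWithinAt
      · intro t ht
        rw [interior_Icc] at ht
        have h1 : Real.pi - δ ≤ t := by linarith [ht.1]
        have h2 : t < Real.pi := lt_trans ht.2 hyπ
        exact (hG t h1 h2).differentiableAt.differentiableWithinAt
      · intro t ht
        rw [interior_Icc] at ht
        have h1 : Real.pi - δ ≤ t := by linarith [ht.1]
        have h2 : t < Real.pi := lt_trans ht.2 hyπ
        rw [(hG t h1 h2).deriv]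
        exact hGnn t h1 h2
    exact hmm (left_mem_Icc.mpr hy) (right_mem_Icc.mpr hy) hy
  set C : ℝ := En u (Real.pi - δ / 2) + 2 * ε₀ * Real.log (Real.pi - (Real.pi - δ / 2)) with hCdef
  set x : ℝ := min (δ / 4) (Real.exp ((C - 2) / (2 * ε₀))) with hxdef
  have hxpos : 0 < x := lt_min (by linarith) (Real.exp_pos _)
  have hxδ : x ≤ δ / 4 := min_le_left _ _
  set y : ℝ := Real.pi - x with hydef
  have hy1 : Real.pi - δ / 2 ≤ y := by rw [hydef]; linarith
  have hy2 : y < Real.pi := by rw [hydef]; linarith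
  have hlogx : Real.log x ≤ (C - 2) / (2 * ε₀) := by
    calc Real.log x ≤ Real.log (Real.exp ((C - 2) / (2 * ε₀))) :=
          Real.log_le_log hxpos (min_le_right _ _)
      _ = (C - 2) / (2 * ε₀) := Real.log_exp _
  have hEny : En u y < 1 := (hmem y (by linarith) hy2).2.2
  have hm := hmono y hy1 hy2
  have hπy : Real.pi - y = x := by rw [hydef]; ring
  rw [hπy] at hm
  have h1 : 2 * ε₀ * Real.log x ≤ C - 2 := by
    have h2 := mul_le_mul_of_nonneg_left hlogx (by positivity : (0:ℝ) ≤ 2 * ε₀)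
    calc 2 * ε₀ * Real.log x ≤ 2 * ε₀ * ((C - 2) / (2 * ε₀)) := h2
      _ = C - 2 := by field_simp
  linarith

end SEB2


section ThmAux
open Set Filter Topology

lemma tendsto_pole_zero {g : ℝ → ℝ → ℂ} {c : ℂ}
    (h : ∀ ε > 0, ∃ δ > 0, ∀ θ ∈ Ioo (0:ℝ) δ, ∀ φ : ℝ, ‖g θ φ - c‖ < ε) (φ₀ : ℝ) :
    Tendsto (fun θ => g θ φ₀) (𝓝[Ioo 0 Real.pi] 0) (𝓝 c) := by
  rw [Metric.tendsto_nhdsWithin_nhds]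
  intro ε hε
  obtain ⟨δ, hδ, hp⟩ := h ε hε
  refine ⟨δ, hδ, ?_⟩
  intro x hx hdist
  rw [dist_eq_norm]
  apply hp x ⟨hx.1, ?_⟩ φ₀
  rwa [Real.dist_eq, sub_zero, abs_of_pos hx.1] at hdist

lemma tendsto_pole_pi {g : ℝ → ℝ → ℂ} {c : ℂ}
    (h : ∀ ε > 0, ∃ δ > 0, ∀ θ ∈ Ioo (Real.pi - δ) Real.pi, ∀ φ : ℝ, ‖g θ φ - c‖ < ε) (φ₀ : ℝ) :
    Tendsto (fun θ => g θ φ₀) (𝓝[Ioo 0 Real.pi] Real.pi) (𝓝 c) := by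
  rw [Metric.tendsto_nhdsWithin_nhds]
  intro ε hε
  obtain ⟨δ, hδ, hp⟩ := h ε hε
  refine ⟨δ, hδ, ?_⟩
  intro x hx hdist
  rw [dist_eq_norm]
  apply hp x ⟨?_, hx.2⟩ φ₀
  rw [Real.dist_eq, abs_of_neg (by linarith [hx.2] : x - Real.pi < 0)] at hdist
  linarith

end ThmAux


open Set Filter Topology

set_option maxHeartbeats 1000000 in
/-- Let `λ` be the eigenvalue of the spin-weighted oblate
spheroidal operator (spin `s = ±2`, azimuthal mode `m`, parameter `ν`)
corresponding to a normalized smooth spin-weighted eigenfunction. Then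
`Λ̃ = λ + s + ν² + 4|ν|` satisfies `Λ̃ ≥ max(2, m(m+1) − 4)`. -/
theorem spheroidal_eigenvalue_bound (s : ℤ) (hs : s = 2 ∨ s = -2) (m : ℤ) (ν lam : ℝ)
    (Ξ : ℝ → ℝ → ℂ) (hΞ : SmoothSpinWeighted s Ξ)
    (hmode : ∀ θ φ : ℝ, pdPhi Ξ θ φ = Complex.I * (m : ℂ) * Ξ θ φ)
    (hnorm : (∫ θ in (0:ℝ)..Real.pi, ∫ φ in (0:ℝ)..(2 * Real.pi),
        ‖Ξ θ φ‖ ^ 2 * Real.sin θ) = 1)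
    (heig : ∀ θ ∈ Set.Ioo (0:ℝ) Real.pi, ∀ φ : ℝ,
        spinLapNu s ν Ξ θ φ = (lam : ℂ) * Ξ θ φ) :
    max 2 ((m : ℝ) * ((m : ℝ) + 1) - 4) ≤ lam + (s : ℝ) + ν ^ 2 + 4 * |ν| := by
  classical
  have hπ := Real.pi_pos
  set u : ℝ → ℂ := fun t => Ξ t 0 with hu
  have hbase := hΞ Ξ InZClosure.base
  have hcd := hbase.1
  -- slice smoothness
  have hslice : ∀ φ₀ : ℝ, ContDiffOn ℝ (⊤ : ℕ∞) (fun t => Ξ t φ₀) (Ioo 0 Real.pi) := by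
    intro φ₀
    exact hcd.comp ((contDiff_id.prodMk contDiff_const).contDiffOn)
      (fun t ht => ⟨ht, mem_univ _⟩)
  have husm : ContDiffOn ℝ (⊤ : ℕ∞) u (Ioo 0 Real.pi) := hslice 0
  have hud : ∀ θ ∈ Ioo (0:ℝ) Real.pi, DifferentiableAt ℝ u θ := fun θ hθ =>
    (husm.contDiffAt (isOpen_Ioo.mem_nhds hθ)).differentiableAt (by simp)
  have hud' : ∀ θ ∈ Ioo (0:ℝ) Real.pi, DifferentiableAt ℝ (deriv u) θ := by
    intro θ hθ
    have h1 : ContDiffOn ℝ (⊤ : ℕ∞) (deriv u) (Ioo 0 Real.pi) := husm.deriv_of_isOpen isOpen_Ioo (by simp)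
    exact (h1.contDiffAt (isOpen_Ioo.mem_nhds hθ)).differentiableAt (by simp)
  have hwd : ∀ θ ∈ Ioo (0:ℝ) Real.pi, DifferentiableAt ℝ (SEB.wf u) θ := by
    intro θ hθ
    exact ((Complex.ofRealCLM.differentiable.comp Real.differentiable_sin) θ).mul (hud' θ hθ)
  have hφdiff : ∀ θ ∈ Ioo (0:ℝ) Real.pi, ∀ φ : ℝ, DifferentiableAt ℝ (fun p => Ξ θ p) φ := by
    intro θ hθ φ
    have h1 : ContDiffAt ℝ (⊤ : ℕ∞) (fun p : ℝ × ℝ => Ξ p.1 p.2) (θ, φ) :=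
      hcd.contDiffAt (((isOpen_Ioo.prod isOpen_univ)).mem_nhds ⟨hθ, mem_univ _⟩)
    exact (h1.differentiableAt (by simp)).comp φ ((differentiableAt_const θ).prodMk differentiableAt_id)
  -- separation of variables
  have hsep : ∀ θ ∈ Ioo (0:ℝ) Real.pi, ∀ φ : ℝ,
      Ξ θ φ = u θ * Complex.exp (Complex.I * (m:ℂ) * (φ:ℂ)) := by
    intro θ hθ φ
    have hgd : ∀ ψ : ℝ, HasDerivAt
        (fun p : ℝ => Ξ θ p * Complex.exp (-(Complex.I * (m:ℂ) * (p:ℂ)))) 0 ψ := by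
      intro ψ
      have h1 : HasDerivAt (fun p : ℝ => Ξ θ p) (Complex.I * (m:ℂ) * Ξ θ ψ) ψ := by
        have := (hφdiff θ hθ ψ).hasDerivAt
        rwa [show deriv (fun p => Ξ θ p) ψ = Complex.I * (m:ℂ) * Ξ θ ψ from hmode θ ψ] at this
      have h2 : HasDerivAt (fun p : ℝ => -(Complex.I * (m:ℂ) * (p:ℂ)))
          (-(Complex.I * (m:ℂ))) ψ := by
        have h3 : HasDerivAt (fun p : ℝ => (p:ℂ)) 1 ψ := by
          exact Complex.ofRealCLM.hasDerivAt (x := ψ)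
        have h5 := (h3.const_mul (Complex.I * (m:ℂ))).neg; rw [mul_one] at h5; exact h5
      have h4 := h2.cexp
      have h5 := h1.mul h4
      have : Complex.I * (m:ℂ) * Ξ θ ψ * Complex.exp (-(Complex.I * (m:ℂ) * (ψ:ℂ)))
          + Ξ θ ψ * (Complex.exp (-(Complex.I * (m:ℂ) * (ψ:ℂ))) * -(Complex.I * (m:ℂ))) = 0 := by
        ring
      rwa [this] at h5
    have hconst := is_const_of_deriv_eq_zero
      (fun ψ => (hgd ψ).differentiableAt) (fun ψ => (hgd ψ).deriv) φ 0
    have hx : Complex.exp (-(Complex.I * (m:ℂ) * (φ:ℂ))) * Complex.exp (Complex.I * (m:ℂ) * (φ:ℂ)) = 1 := by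
      rw [← Complex.exp_add, neg_add_cancel, Complex.exp_zero]
    have h0 : Ξ θ 0 * Complex.exp (-(Complex.I * (m:ℂ) * ((0:ℝ):ℂ))) = u θ := by
      simp [hu]
    calc Ξ θ φ = Ξ θ φ * Complex.exp (-(Complex.I * (m:ℂ) * (φ:ℂ)))
          * Complex.exp (Complex.I * (m:ℂ) * (φ:ℂ)) := by rw [mul_assoc, hx, mul_one]
      _ = u θ * Complex.exp (Complex.I * (m:ℂ) * (φ:ℂ)) := by rw [hconst, h0]
  set V : ℝ → ℝ := fun θ => ((m:ℝ)^2 - 2*(s:ℝ)*(m:ℝ)*Real.cos θ + 4*Real.cos θ^2)/Real.sin θ^2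
      - (s:ℝ) - ν^2*Real.cos θ^2 + 2*ν*(s:ℝ)*Real.cos θ with hV
  have hode : ∀ θ ∈ Ioo (0:ℝ) Real.pi,
      deriv (SEB.wf u) θ = ((V θ - lam : ℝ) : ℂ) * u θ * (Real.sin θ : ℂ) := by
    intro θ hθ
    have hsin : 0 < Real.sin θ := Real.sin_pos_of_pos_of_lt_pi hθ.1 hθ.2
    have hsc : (Real.sin θ : ℂ) ≠ 0 := Complex.ofReal_ne_zero.mpr hsin.ne'
    have h := heig θ hθ 0
    simp only [spinLapNu, spinLap] at h
    have hp1 : pdPhi Ξ θ 0 = Complex.I * (m:ℂ) * u θ := hmode θ 0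
    have hpp : pdPhi (pdPhi Ξ) θ 0 = -((m:ℝ)^2 : ℂ) * u θ := by
      show deriv (fun p => pdPhi Ξ θ p) 0 = _
      have hfe : (fun p => pdPhi Ξ θ p) = fun p => Complex.I * (m:ℂ) * Ξ θ p :=
        funext (hmode θ)
      rw [hfe, deriv_const_mul_field]
      rw [show deriv (fun p => Ξ θ p) 0 = pdPhi Ξ θ 0 from rfl, hp1]
      rw [show Complex.I * (m:ℂ) * (Complex.I * (m:ℂ) * u θ)
          = (Complex.I*Complex.I) * ((m:ℂ) * (m:ℂ) * u θ) from by ring, Complex.I_mul_I]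
      push_cast; ring
    have hpt : pdTheta (fun t p => (Real.sin t : ℂ) * pdTheta Ξ t p) θ 0 = deriv (SEB.wf u) θ := rfl
    have hXu : Ξ θ 0 = u θ := rfl
    rw [hpt, hp1, hpp, hXu] at h
    have hIterm : 2 * (s:ℂ) * Complex.I * ((Real.cos θ / Real.sin θ ^ 2 : ℝ):ℂ)
        * (Complex.I * (m:ℂ) * u θ)
        = -(2 * (s:ℂ) * (m:ℂ) * ((Real.cos θ / Real.sin θ ^ 2 : ℝ):ℂ) * u θ) := by
      rw [show 2 * (s:ℂ) * Complex.I * ((Real.cos θ / Real.sin θ ^ 2 : ℝ):ℂ)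
          * (Complex.I * (m:ℂ) * u θ)
          = (Complex.I * Complex.I) * (2 * (s:ℂ) * (m:ℂ)
            * ((Real.cos θ / Real.sin θ ^ 2 : ℝ):ℂ) * u θ) from by ring, Complex.I_mul_I]
      ring
    rw [hIterm] at h
    rw [hV]
    have hsc2 : Complex.sin (θ:ℂ) ≠ 0 := by rw [← Complex.ofReal_sin]; exact hsc
    push_cast at h ⊢
    field_simp [hsc2] at h ⊢
    linear_combination (-1 : ℂ) * h
  -- pole limits of u
  obtain ⟨u0, hu0⟩ : ∃ u0 : ℂ, Tendsto u (𝓝[Ioo 0 Real.pi] 0) (𝓝 u0) := by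
    obtain ⟨c, hc⟩ := hbase.2.2.1
    exact ⟨c, tendsto_pole_zero hc 0⟩
  obtain ⟨upi, hupi⟩ : ∃ upi : ℂ, Tendsto u (𝓝[Ioo 0 Real.pi] Real.pi) (𝓝 upi) := by
    obtain ⟨c, hc⟩ := hbase.2.2.2
    exact ⟨c, tendsto_pole_pi hc 0⟩
  haveI hnb0 : (𝓝[Ioo (0:ℝ) Real.pi] (0:ℝ)).NeBot := by
    rw [← mem_closure_iff_nhdsWithin_neBot, closure_Ioo hπ.ne]
    exact ⟨le_refl 0, hπ.le⟩
  haveI hnbπ : (𝓝[Ioo (0:ℝ) Real.pi] Real.pi).NeBot := by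
    rw [← mem_closure_iff_nhdsWithin_neBot, closure_Ioo hπ.ne]
    exact ⟨hπ.le, le_refl Real.pi⟩
  -- Z1 smoothness data
  have hZ1 := hΞ (Ztilde1 s Ξ) (InZClosure.z1 InZClosure.base)
  set E : ℂ := Complex.exp (Complex.I * (m:ℂ) * ((Real.pi/2 : ℝ):ℂ)) with hE
  have hEne : E ≠ 0 := Complex.exp_ne_zero _
  have hz1half : ∀ θ ∈ Ioo (0:ℝ) Real.pi, Ztilde1 s Ξ θ (Real.pi/2) = -(E * deriv u θ) := by
    intro θ hθ
    have hpt2 : pdTheta Ξ θ (Real.pi/2) = deriv u θ * E := by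
      show deriv (fun t => Ξ t (Real.pi/2)) θ = _
      have heq : deriv (fun t => Ξ t (Real.pi/2)) θ = deriv (fun t => u t * E) θ := by
        apply Filter.EventuallyEq.deriv_eq
        filter_upwards [isOpen_Ioo.mem_nhds hθ] with t ht
        exact hsep t ht (Real.pi/2)
      rw [heq, deriv_mul_const (hud θ hθ)]
    simp only [Ztilde1, Real.sin_pi_div_two, Real.cos_pi_div_two]
    rw [hpt2]
    push_cast
    ring
  obtain ⟨d0, hd0⟩ : ∃ d0 : ℂ, Tendsto (deriv u) (𝓝[Ioo 0 Real.pi] 0) (𝓝 d0) := by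
    obtain ⟨c, hc⟩ := hZ1.2.2.1
    refine ⟨-(E⁻¹ * c), ?_⟩
    have h1 : Tendsto (fun θ => -(E⁻¹ * Ztilde1 s Ξ θ (Real.pi/2))) (𝓝[Ioo 0 Real.pi] 0)
        (𝓝 (-(E⁻¹ * c))) := ((tendsto_pole_zero hc (Real.pi/2)).const_mul E⁻¹).neg
    apply h1.congr'
    filter_upwards [self_mem_nhdsWithin] with θ hθ
    rw [hz1half θ hθ]
    field_simp
  obtain ⟨dpi, hdpi⟩ : ∃ dpi : ℂ, Tendsto (deriv u) (𝓝[Ioo 0 Real.pi] Real.pi) (𝓝 dpi) := by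
    obtain ⟨c, hc⟩ := hZ1.2.2.2
    refine ⟨-(E⁻¹ * c), ?_⟩
    have h1 : Tendsto (fun θ => -(E⁻¹ * Ztilde1 s Ξ θ (Real.pi/2))) (𝓝[Ioo 0 Real.pi] Real.pi)
        (𝓝 (-(E⁻¹ * c))) := ((tendsto_pole_pi hc (Real.pi/2)).const_mul E⁻¹).neg
    apply h1.congr'
    filter_upwards [self_mem_nhdsWithin] with θ hθ
    rw [hz1half θ hθ]
    field_simp
  have hsinC : ∀ x : ℝ, Tendsto (fun θ : ℝ => ((Real.sin θ : ℝ):ℂ)) (𝓝[Ioo 0 Real.pi] x)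
      (𝓝 ((Real.sin x : ℝ):ℂ)) :=
    fun x => ((Complex.continuous_ofReal.comp Real.continuous_sin).tendsto x).mono_left
      nhdsWithin_le_nhds
  have hw0 : Tendsto (SEB.wf u) (𝓝[Ioo 0 Real.pi] 0) (𝓝 0) := by
    have h2 := (hsinC 0).mul hd0
    rw [Real.sin_zero] at h2
    simp only [Complex.ofReal_zero, zero_mul] at h2
    exact h2
  have hwpi : Tendsto (SEB.wf u) (𝓝[Ioo 0 Real.pi] Real.pi) (𝓝 0) := by
    have h2 := (hsinC Real.pi).mul hdpi
    rw [Real.sin_pi] at h2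
    simp only [Complex.ofReal_zero, zero_mul] at h2
    exact h2
  -- the Z1 identity at phi = 0
  have hz1zero : ∀ θ ∈ Ioo (0:ℝ) Real.pi, Complex.I * Ztilde1 s Ξ θ 0
      = ((((s:ℝ) + (m:ℝ) * Real.cos θ) / Real.sin θ : ℝ) : ℂ) * u θ := by
    intro θ hθ
    have hsin : 0 < Real.sin θ := Real.sin_pos_of_pos_of_lt_pi hθ.1 hθ.2
    have hsc2 : Complex.sin (θ:ℂ) ≠ 0 := by
      rw [← Complex.ofReal_sin]
      exact Complex.ofReal_ne_zero.mpr hsin.ne'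
    simp only [Ztilde1, Real.sin_zero, Real.cos_zero]
    rw [hmode θ 0, show Ξ θ 0 = u θ from rfl]
    push_cast
    field_simp
    ring_nf
    rw [Complex.I_sq]
    ring
  have hqcont : Continuous (fun θ : ℝ => ((s:ℝ) + (m:ℝ) * Real.cos θ)) :=
    continuous_const.add (continuous_const.mul Real.continuous_cos)
  -- vanishing of u at the poles from Z1 boundedness
  have hu0Z : ((s:ℝ) + (m:ℝ)) ≠ 0 → u0 = 0 := by
    intro hms
    obtain ⟨c, hc⟩ := hZ1.2.2.1
    have hB0 : Tendsto (fun θ => ((((s:ℝ) + (m:ℝ) * Real.cos θ) / Real.sin θ : ℝ):ℂ) * u θ)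
        (𝓝[Ioo 0 Real.pi] 0) (𝓝 (Complex.I * c)) := by
      apply ((tendsto_pole_zero hc 0).const_mul Complex.I).congr'
      filter_upwards [self_mem_nhdsWithin] with θ hθ using hz1zero θ hθ
    have h2 : Tendsto (fun θ => ((s:ℝ) + (m:ℝ) * Real.cos θ)) (𝓝 (0:ℝ))
        (𝓝 ((s:ℝ) + (m:ℝ))) := by
      have := hqcont.tendsto (0:ℝ)
      simpa using this
    have hq : Tendsto (fun θ => (Real.sin θ / ((s:ℝ) + (m:ℝ) * Real.cos θ) : ℝ))
        (𝓝[Ioo 0 Real.pi] 0) (𝓝 0) := by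
      have h1 : Tendsto Real.sin (𝓝 (0:ℝ)) (𝓝 0) := by
        simpa using Real.continuous_sin.tendsto 0
      have h3 := h1.div h2 hms
      simp only [zero_div] at h3
      exact h3.mono_left nhdsWithin_le_nhds
    have hevne : ∀ᶠ θ in 𝓝[Ioo (0:ℝ) Real.pi] 0, ((s:ℝ) + (m:ℝ) * Real.cos θ) ≠ 0 :=
      (h2.mono_left nhdsWithin_le_nhds).eventually_ne hms
    have hprod := hB0.mul ((Complex.continuous_ofReal.tendsto 0).comp hq)
    simp only [Complex.ofReal_zero, mul_zero] at hprod
    have hulim : Tendsto u (𝓝[Ioo 0 Real.pi] 0) (𝓝 0) := by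
      apply hprod.congr'
      filter_upwards [self_mem_nhdsWithin, hevne] with θ hθ hne2
      have hsin : 0 < Real.sin θ := Real.sin_pos_of_pos_of_lt_pi hθ.1 hθ.2
      show ((((s:ℝ) + (m:ℝ) * Real.cos θ) / Real.sin θ : ℝ):ℂ) * u θ
          * (((Real.sin θ / ((s:ℝ) + (m:ℝ) * Real.cos θ)) : ℝ):ℂ) = u θ
      have : ((((s:ℝ) + (m:ℝ) * Real.cos θ) / Real.sin θ) : ℝ)
          * ((Real.sin θ / ((s:ℝ) + (m:ℝ) * Real.cos θ)) : ℝ) = 1 := by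
        field_simp
      rw [mul_comm (((((s:ℝ) + (m:ℝ) * Real.cos θ) / Real.sin θ : ℝ)):ℂ) (u θ), mul_assoc,
        ← Complex.ofReal_mul, this]
      simp
    exact tendsto_nhds_unique hu0 hulim
  have hupiZ : ((s:ℝ) - (m:ℝ)) ≠ 0 → upi = 0 := by
    intro hms
    obtain ⟨c, hc⟩ := hZ1.2.2.2
    have hB0 : Tendsto (fun θ => ((((s:ℝ) + (m:ℝ) * Real.cos θ) / Real.sin θ : ℝ):ℂ) * u θ)
        (𝓝[Ioo 0 Real.pi] Real.pi) (𝓝 (Complex.I * c)) := by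
      apply ((tendsto_pole_pi hc 0).const_mul Complex.I).congr'
      filter_upwards [self_mem_nhdsWithin] with θ hθ using hz1zero θ hθ
    have h2 : Tendsto (fun θ => ((s:ℝ) + (m:ℝ) * Real.cos θ)) (𝓝 Real.pi)
        (𝓝 ((s:ℝ) - (m:ℝ))) := by
      have := hqcont.tendsto Real.pi
      simpa [Real.cos_pi, sub_eq_add_neg] using this
    have hq : Tendsto (fun θ => (Real.sin θ / ((s:ℝ) + (m:ℝ) * Real.cos θ) : ℝ))
        (𝓝[Ioo 0 Real.pi] Real.pi) (𝓝 0) := by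
      have h1 : Tendsto Real.sin (𝓝 Real.pi) (𝓝 0) := by
        have := Real.continuous_sin.tendsto Real.pi
        rwa [Real.sin_pi] at this
      have h3 := h1.div h2 hms
      simp only [zero_div] at h3
      exact h3.mono_left nhdsWithin_le_nhds
    have hevne : ∀ᶠ θ in 𝓝[Ioo (0:ℝ) Real.pi] Real.pi, ((s:ℝ) + (m:ℝ) * Real.cos θ) ≠ 0 :=
      (h2.mono_left nhdsWithin_le_nhds).eventually_ne hms
    have hprod := hB0.mul ((Complex.continuous_ofReal.tendsto 0).comp hq)
    simp only [Complex.ofReal_zero, mul_zero] at hprod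
    have hulim : Tendsto u (𝓝[Ioo 0 Real.pi] Real.pi) (𝓝 0) := by
      apply hprod.congr'
      filter_upwards [self_mem_nhdsWithin, hevne] with θ hθ hne2
      have hsin : 0 < Real.sin θ := Real.sin_pos_of_pos_of_lt_pi hθ.1 hθ.2
      show ((((s:ℝ) + (m:ℝ) * Real.cos θ) / Real.sin θ : ℝ):ℂ) * u θ
          * (((Real.sin θ / ((s:ℝ) + (m:ℝ) * Real.cos θ)) : ℝ):ℂ) = u θ
      have : ((((s:ℝ) + (m:ℝ) * Real.cos θ) / Real.sin θ) : ℝ)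
          * ((Real.sin θ / ((s:ℝ) + (m:ℝ) * Real.cos θ)) : ℝ) = 1 := by
        field_simp
      rw [mul_comm (((((s:ℝ) + (m:ℝ) * Real.cos θ) / Real.sin θ : ℝ)):ℂ) (u θ), mul_assoc,
        ← Complex.ofReal_mul, this]
      simp
    exact tendsto_nhds_unique hupi hulim
  have hsabs : |(s:ℝ)| = 2 := by rcases hs with h | h <;> rw [h] <;> norm_num
  have hs4 : (s:ℝ)^2 = 4 := by rcases hs with h | h <;> rw [h] <;> norm_num
  set M : ℝ := 2 + ν^2 + 4*|ν| + |lam| with hM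
  have hrest : ∀ θ : ℝ, 0 ≤ Real.sin θ →
      ((s:ℝ) + ν^2*Real.cos θ^2 - 2*ν*(s:ℝ)*Real.cos θ + lam) * Real.sin θ ≤ M := by
    intro θ h0
    have h1 : Real.sin θ ≤ 1 := Real.sin_le_one θ
    have hc2 : Real.cos θ^2 ≤ 1 := Real.cos_sq_le_one θ
    have hb3 : -(2*ν*(s:ℝ)*Real.cos θ) ≤ 4*|ν| := by
      have hc1 : |Real.cos θ| ≤ 1 := Real.abs_cos_le_one θ
      have e2 : |2*ν*(s:ℝ)*Real.cos θ| ≤ 4*|ν| := by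
        rw [abs_mul, abs_mul, abs_mul, hsabs, abs_two]
        nlinarith [abs_nonneg ν]
      linarith [neg_abs_le (2*ν*(s:ℝ)*Real.cos θ)]
    have hb4 : ν^2*Real.cos θ^2 ≤ ν^2 := by nlinarith [sq_nonneg ν]
    have hb1 : (s:ℝ) ≤ 2 := by rcases hs with h | h <;> rw [h] <;> norm_num
    have hb5 := le_abs_self lam
    have hexprle : ((s:ℝ) + ν^2*Real.cos θ^2 - 2*ν*(s:ℝ)*Real.cos θ + lam) ≤ M := by
      rw [hM]; linarith
    have hMnn : 0 ≤ M := by rw [hM]; positivity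
    rcases le_or_gt ((s:ℝ) + ν^2*Real.cos θ^2 - 2*ν*(s:ℝ)*Real.cos θ + lam) 0 with hle | hgt
    · have := mul_nonpos_of_nonpos_of_nonneg hle h0
      linarith
    · nlinarith
  have hVsin : ∀ θ ∈ Ioo (0:ℝ) Real.pi, (V θ - lam) * Real.sin θ
      = ((m:ℝ)^2 - 2*(s:ℝ)*(m:ℝ)*Real.cos θ + 4*Real.cos θ^2)/Real.sin θ
        - ((s:ℝ) + ν^2*Real.cos θ^2 - 2*ν*(s:ℝ)*Real.cos θ + lam) * Real.sin θ := by
    intro θ hθ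
    have hsin : 0 < Real.sin θ := Real.sin_pos_of_pos_of_lt_pi hθ.1 hθ.2
    rw [hV]
    field_simp
    ring
  have hu0L : m = -s → u0 = 0 := by
    intro hm
    have hmr : (m:ℝ) = -(s:ℝ) := by rw [hm]; push_cast; ring
    apply SEB2.pole0 u V lam M u0 hud hwd hode ?_ hu0 hw0
    intro θ hθ
    have hθπ : θ ∈ Ioo (0:ℝ) Real.pi := ⟨hθ.1, by linarith [hθ.2, hπ]⟩
    have hsin : 0 < Real.sin θ := Real.sin_pos_of_pos_of_lt_pi hθπ.1 hθπ.2
    have hcos : 0 ≤ Real.cos θ := Real.cos_nonneg_of_mem_Icc ⟨by linarith [hθ.1, hπ], hθ.2.le⟩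
    have hsle : Real.sin θ ≤ θ := Real.sin_le hθ.1.le
    have hN : 4 ≤ (m:ℝ)^2 - 2*(s:ℝ)*(m:ℝ)*Real.cos θ + 4*Real.cos θ^2 := by
      rw [hmr]; nlinarith [hs4, hcos, sq_nonneg (Real.cos θ)]
    have h1 : 4/θ ≤ 4/Real.sin θ := by
      rw [div_le_div_iff₀ hθ.1 hsin]; linarith
    have h2 : 4/Real.sin θ
        ≤ ((m:ℝ)^2 - 2*(s:ℝ)*(m:ℝ)*Real.cos θ + 4*Real.cos θ^2)/Real.sin θ := by
      rw [div_le_div_iff₀ hsin hsin]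
      exact mul_le_mul_of_nonneg_right hN hsin.le
    have h3 := hrest θ hsin.le
    have h4 := hVsin θ hθπ
    linarith
  have hupiL : m = s → upi = 0 := by
    intro hm
    have hmr : (m:ℝ) = (s:ℝ) := by rw [hm]
    apply SEB2.polePi u V lam M upi hud hwd hode ?_ hupi hwpi
    intro θ hθ
    have hθπ : θ ∈ Ioo (0:ℝ) Real.pi := ⟨by linarith [hθ.1, hπ], hθ.2⟩
    have hsin : 0 < Real.sin θ := Real.sin_pos_of_pos_of_lt_pi hθπ.1 hθπ.2
    have hcos : Real.cos θ ≤ 0 :=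
      Real.cos_nonpos_of_pi_div_two_le_of_le hθ.1.le (by linarith [hθ.2, hπ])
    have hsle : Real.sin θ ≤ Real.pi - θ := by
      have h5 : Real.sin (Real.pi - θ) ≤ Real.pi - θ := Real.sin_le (by linarith [hθ.2])
      rwa [Real.sin_pi_sub] at h5
    have hN : 4 ≤ (m:ℝ)^2 - 2*(s:ℝ)*(m:ℝ)*Real.cos θ + 4*Real.cos θ^2 := by
      rw [hmr]; nlinarith [hs4, hcos, sq_nonneg (Real.cos θ)]
    have h1 : 4/(Real.pi - θ) ≤ 4/Real.sin θ := by
      rw [div_le_div_iff₀ (by linarith [hθ.2] : (0:ℝ) < Real.pi - θ) hsin]; linarith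
    have h2 : 4/Real.sin θ
        ≤ ((m:ℝ)^2 - 2*(s:ℝ)*(m:ℝ)*Real.cos θ + 4*Real.cos θ^2)/Real.sin θ := by
      rw [div_le_div_iff₀ hsin hsin]
      exact mul_le_mul_of_nonneg_right hN hsin.le
    have h3 := hrest θ hsin.le
    have h4 := hVsin θ hθπ
    linarith
  -- u is not identically zero
  obtain ⟨θ₀, hθ₀mem, hθ₀ne⟩ : ∃ θ₀ ∈ Ioo (0:ℝ) Real.pi, u θ₀ ≠ 0 := by
    by_contra hcon
    push_neg at hcon
    have hzero : EqOn (fun θ => ∫ φ in (0:ℝ)..(2*Real.pi), ‖Ξ θ φ‖^2 * Real.sin θ)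
        (fun _ => (0:ℝ)) (Set.uIcc (0:ℝ) Real.pi) := by
      intro θ hθ
      rw [Set.uIcc_of_le hπ.le] at hθ
      show (∫ φ in (0:ℝ)..(2*Real.pi), ‖Ξ θ φ‖^2 * Real.sin θ) = 0
      rcases eq_or_lt_of_le hθ.1 with h0 | h0
      · rw [← h0]
        simp [Real.sin_zero]
      · rcases eq_or_lt_of_le hθ.2 with h1 | h1
        · rw [h1]
          simp [Real.sin_pi]
        · have hz : ∀ φ : ℝ, Ξ θ φ = 0 := by
            intro φ
            rw [hsep θ ⟨h0, h1⟩ φ, hcon θ ⟨h0, h1⟩, zero_mul]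
          simp [hz]
    rw [intervalIntegral.integral_congr hzero] at hnorm
    simp at hnorm
  -- vanishing facts at poles
  have hu0v : m ≠ s → u0 = 0 := by
    intro hms
    by_cases hm2 : m = -s
    · exact hu0L hm2
    · apply hu0Z
      have h1 : (s + m : ℤ) ≠ 0 := by omega
      have h2 : ((s:ℝ) + (m:ℝ)) = ((s + m : ℤ) : ℝ) := by push_cast; ring
      rw [h2]
      exact_mod_cast h1
  have hupiv : m ≠ -s → upi = 0 := by
    intro hms
    by_cases hm2 : m = s
    · exact hupiL hm2
    · apply hupiZ
      have h1 : (s - m : ℤ) ≠ 0 := by omega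
      have h2 : ((s:ℝ) - (m:ℝ)) = ((s - m : ℤ) : ℝ) := by push_cast; ring
      rw [h2]
      exact_mod_cast h1
  set Lam : ℝ := lam + (s:ℝ) + ν^2 + 4*|ν| with hLam
  -- generic potential lower bound
  have hpotgen : ∀ a b C : ℝ,
      (∀ x : ℝ, ((m:ℝ)^2 - 2*(s:ℝ)*(m:ℝ)*x + 4*x^2) - (a*x + b)^2 = C*(1 - x^2)) →
      ∀ θ ∈ Ioo (0:ℝ) Real.pi,
        (C + a - Lam) * Real.sin θ^2 ≤ (V θ - lam + a) * Real.sin θ^2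
          - (a*Real.cos θ + b)^2 := by
    intro a b C hid θ hθ
    have hsin : 0 < Real.sin θ := Real.sin_pos_of_pos_of_lt_pi hθ.1 hθ.2
    have hVs : (V θ - lam + a)*Real.sin θ^2
        = ((m:ℝ)^2 - 2*(s:ℝ)*(m:ℝ)*Real.cos θ + 4*Real.cos θ^2)
          - ((s:ℝ) + ν^2*Real.cos θ^2 - 2*ν*(s:ℝ)*Real.cos θ + lam - a)*Real.sin θ^2 := by
      rw [hV]
      field_simp
      ring
    have hpyth : Real.sin θ^2 = 1 - Real.cos θ^2 := by
      nlinarith [Real.sin_sq_add_cos_sq θ]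
    have hc2 : Real.cos θ^2 ≤ 1 := Real.cos_sq_le_one θ
    have hb3 : -(4*|ν|) ≤ 2*ν*(s:ℝ)*Real.cos θ := by
      have hc1 : |Real.cos θ| ≤ 1 := Real.abs_cos_le_one θ
      have e2 : |2*ν*(s:ℝ)*Real.cos θ| ≤ 4*|ν| := by
        rw [abs_mul, abs_mul, abs_mul, hsabs, abs_two]
        nlinarith [abs_nonneg ν]
      linarith [neg_abs_le (2*ν*(s:ℝ)*Real.cos θ)]
    have hb4 : ν^2*Real.cos θ^2 ≤ ν^2 := by nlinarith [sq_nonneg ν]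
    have key : 0 ≤ a - (s:ℝ) - ν^2*Real.cos θ^2 + 2*ν*(s:ℝ)*Real.cos θ - lam
        - (a - (s:ℝ) - ν^2 - 4*|ν| - lam) := by
      linarith
    have hid' := hid (Real.cos θ)
    have hCp : C*(1 - Real.cos θ^2) = C*Real.sin θ^2 := by rw [hpyth]
    have hkeyp := mul_nonneg key (sq_nonneg (Real.sin θ))
    rw [hLam]
    nlinarith [hkeyp, hVs, hid', hCp]
  -- generic application of the core argument
  have hcore : ∀ a b C : ℝ,
      (∀ x : ℝ, ((m:ℝ)^2 - 2*(s:ℝ)*(m:ℝ)*x + 4*x^2) - (a*x + b)^2 = C*(1 - x^2)) →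
      Complex.normSq u0 * (a + b) ≤ 0 →
      0 ≤ Complex.normSq upi * (b - a) →
      Lam < C + a → False := by
    intro a b C hid hb0 hbpi hlt
    exact SEB2.core u V lam a b (C + a - Lam) (by linarith) hud hwd hode
      (hpotgen a b C hid) u0 upi hu0 hw0 hupi hwpi hb0 hbpi θ₀ hθ₀mem hθ₀ne
  -- the bound 2 ≤ Lam
  have hK1 : 2 ≤ Lam := by
    by_contra hlt
    push_neg at hlt
    rcases hs with hs2 | hs2
    · refine hcore 2 (-(m:ℝ)) 0 ?_ ?_ ?_ (by linarith)
      · intro x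
        rw [hs2]
        push_cast
        ring
      · by_cases hm : m = 2
        · rw [hm]
          norm_num
        · rw [hu0v (by omega)]
          simp
      · by_cases hm : m = -2
        · rw [hm]
          push_cast
          norm_num
        · rw [hupiv (by omega)]
          simp
    · refine hcore 2 ((m:ℝ)) 0 ?_ ?_ ?_ (by linarith)
      · intro x
        rw [hs2]
        push_cast
        ring
      · by_cases hm : m = -2
        · rw [hm]
          push_cast
          norm_num
        · rw [hu0v (by omega)]
          simp
      · by_cases hm : m = 2
        · rw [hm]
          push_cast
          norm_num
        · rw [hupiv (by omega)]
          simp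
  have hX : (m:ℝ)*((m:ℝ)+1) - 4 ≤ Lam := by
    by_cases hm6 : m*(m+1) ≤ 6
    · have h1 : (m:ℝ)*((m:ℝ)+1) ≤ 6 := by exact_mod_cast hm6
      linarith
    · push_neg at hm6
      have hm34 : 3 ≤ m ∨ m ≤ -4 := by
        by_contra hcc
        push_neg at hcc
        obtain ⟨h3, h4⟩ := hcc
        nlinarith [mul_nonneg (by omega : (0:ℤ) ≤ m + 3) (by omega : (0:ℤ) ≤ 2 - m)]
      by_contra hXc
      push_neg at hXc
      rcases hm34 with hm3 | hm4
      · refine hcore ((m:ℝ)) (-(s:ℝ)) ((m:ℝ)^2 - 4) ?_ ?_ ?_ ?_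
        · intro x
          linear_combination (-1 : ℝ) * hs4
        · rw [hu0v (by rcases hs with h | h <;> omega)]
          simp
        · rw [hupiv (by rcases hs with h | h <;> omega)]
          simp
        · have h5 : (3:ℝ) ≤ (m:ℝ) := by exact_mod_cast hm3
          nlinarith [hXc]
      · refine hcore (-(m:ℝ)) ((s:ℝ)) ((m:ℝ)^2 - 4) ?_ ?_ ?_ ?_
        · intro x
          linear_combination (-1 : ℝ) * hs4
        · rw [hu0v (by rcases hs with h | h <;> omega)]
          simp
        · rw [hupiv (by rcases hs with h | h <;> omega)]
          simp
        · have h5 : (m:ℝ) ≤ -4 := by exact_mod_cast hm4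
          nlinarith [hXc]
  exact max_le hK1 hX
end
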